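/- arXiv:1903.09488 — 12 statements merged into one kernel-verified Lean document; each statement's English description precedes it below -/
import Mathlib

section
/- Let Σ ∈ ℝ^{p×p} be symmetric positive semidefinite with unit diagonal (Σ_{ii} = 1 for all i), let S ⊆ {1,…,p} be nonempty, and let ρ > 0, δ > 0, R ∈ [1,∞). If Σ ∈ MRI_S(δ/ρ; R), then for every β ∈ Γ_{S,ρ,R}, every j ∈ S and every k ∉ S one has |(Σβ)_k| + δ < |(Σβ)_j| (i.e., population marginal regression recovers the support of β uniformly over Γ_{S,ρ,R} with slack δ). -/
open Matrix BigOperators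

noncomputable section

/-- MR incoherence condition `Σ ∈ MRI_S(δ'; R)`. -/
def MRI {p : ℕ} (Sig : Matrix (Fin p) (Fin p) ℝ) (S : Finset (Fin p)) (δ' R : ℝ) : Prop :=
  ∀ j ∈ S, ∀ k ∉ S,
    (R / (1 + R)) * (∑ j' ∈ S, |Sig j' j + Sig j' k|) + δ' / (1 + R) < Sig j j + Sig j k ∧
    (R / (1 + R)) * (∑ j' ∈ S, |Sig j' j - Sig j' k|) + δ' / (1 + R) < Sig j j - Sig j k

/-- The parameter class `Γ_{S,ρ,R}`. -/
def Gamma {p : ℕ} (S : Finset (Fin p)) (ρ R : ℝ) : Set (Fin p → ℝ) :=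
  {β | (∀ k ∉ S, β k = 0) ∧ (∀ j ∈ S, ρ < |β j|) ∧
       (∀ j ∈ S, ∀ j' ∈ S, |β j| ≤ R * |β j'|)}

lemma mri_helper {p : ℕ} (Sig : Matrix (Fin p) (Fin p) ℝ)
    (S : Finset (Fin p)) (hSym : Sig.IsSymm)
    (hdiag : ∀ i, Sig i i = 1)
    (ρ δ R : ℝ) (hρ : 0 < ρ) (hδ : 0 < δ) (hR : 1 ≤ R)
    (hMRI : MRI Sig S (δ / ρ) R)
    (β : Fin p → ℝ) (hβ0 : ∀ k ∉ S, β k = 0)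
    (hβmax : ∀ j ∈ S, ∀ j' ∈ S, |β j| ≤ R * |β j'|)
    (j : Fin p) (hj : j ∈ S) (hjρ : ρ < β j)
    (k : Fin p) (hk : k ∉ S) (ε : ℝ) (hε : ε = 1 ∨ ε = -1) :
    δ < Sig.mulVec β j + ε * Sig.mulVec β k := by
  have hβjpos : 0 < β j := lt_trans hρ hjρ
  have hR0 : (0:ℝ) < 1 + R := by linarith
  -- rewrite the quantity as a sum over S
  have hrestrict : ∀ c : Fin p → ℝ, ∑ j' : Fin p, c j' * β j' = ∑ j' ∈ S, c j' * β j' := by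
    intro c
    rw [← Finset.sum_subset (Finset.subset_univ S)]
    intro x _ hx
    rw [hβ0 x hx, mul_zero]
  have hsum : Sig.mulVec β j + ε * Sig.mulVec β k
      = ∑ j' ∈ S, (Sig j' j + ε * Sig j' k) * β j' := by
    have h1 : Sig.mulVec β j = ∑ j' : Fin p, Sig j' j * β j' := by
      simp only [Matrix.mulVec, dotProduct]
      exact Finset.sum_congr rfl fun x _ => by rw [hSym.apply j x]
    have h2 : Sig.mulVec β k = ∑ j' : Fin p, Sig j' k * β j' := by
      simp only [Matrix.mulVec, dotProduct]
      exact Finset.sum_congr rfl fun x _ => by rw [hSym.apply k x]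
    rw [h1, h2, hrestrict, hrestrict, Finset.mul_sum, ← Finset.sum_add_distrib]
    exact Finset.sum_congr rfl fun x _ => by ring
  -- the incoherence inequality for our sign ε
  have hM : (R / (1 + R)) * (∑ j' ∈ S, |Sig j' j + ε * Sig j' k|) + (δ / ρ) / (1 + R)
      < Sig j j + ε * Sig j k := by
    rcases hε with h | h <;> subst h
    · simpa using (hMRI j hj k hk).1
    · have := (hMRI j hj k hk).2
      simpa [sub_eq_add_neg, neg_one_mul] using this
  set A : ℝ := Sig j j + ε * Sig j k with hA
  set T' : ℝ := ∑ j' ∈ S.erase j, |Sig j' j + ε * Sig j' k| with hT'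
  have hT'nonneg : 0 ≤ T' := Finset.sum_nonneg fun x _ => abs_nonneg _
  have hTsplit : ∑ j' ∈ S, |Sig j' j + ε * Sig j' k| = |A| + T' := by
    rw [hT', ← Finset.add_sum_erase S _ hj]
  have hTnonneg : 0 ≤ ∑ j' ∈ S, |Sig j' j + ε * Sig j' k| :=
    Finset.sum_nonneg fun x _ => abs_nonneg _
  have hApos : 0 < A := by
    have hδρ : 0 < δ / ρ := div_pos hδ hρ
    have hRfrac : 0 ≤ R / (1 + R) := div_nonneg (by linarith) (le_of_lt hR0)
    have h1 : 0 < (δ / ρ) / (1 + R) := div_pos hδρ hR0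
    nlinarith [mul_nonneg hRfrac hTnonneg]
  have habsA : |A| = A := abs_of_pos hApos
  -- key scalar inequality: R * T' + δ/ρ < A
  have hkey : R * T' + δ / ρ < A := by
    rw [hTsplit, habsA] at hM
    have h2 : R * (A + T') + δ / ρ < (1 + R) * A := by
      have := mul_lt_mul_of_pos_left hM hR0
      calc R * (A + T') + δ / ρ
          = (1 + R) * ((R / (1 + R)) * (A + T') + (δ / ρ) / (1 + R)) := by
            field_simp
        _ < (1 + R) * A := this
    nlinarith
  -- lower bound each off-diagonal term
  have hterm : ∀ x ∈ S.erase j,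
      -(|Sig x j + ε * Sig x k| * (R * β j)) ≤ (Sig x j + ε * Sig x k) * β x := by
    intro x hx
    have hxS : x ∈ S := Finset.mem_of_mem_erase hx
    have hb : |β x| ≤ R * |β j| := hβmax x hxS j hj
    have habsj : |β j| = β j := abs_of_pos hβjpos
    rw [habsj] at hb
    have h1 : -(|Sig x j + ε * Sig x k| * |β x|) ≤ (Sig x j + ε * Sig x k) * β x := by
      rw [← abs_mul]; exact neg_abs_le _
    have h2 : |Sig x j + ε * Sig x k| * |β x| ≤ |Sig x j + ε * Sig x k| * (R * β j) :=
      mul_le_mul_of_nonneg_left hb (abs_nonneg _)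
    linarith
  have hsumlb : -(R * β j) * T' ≤ ∑ x ∈ S.erase j, (Sig x j + ε * Sig x k) * β x := by
    calc -(R * β j) * T' = ∑ x ∈ S.erase j, -(|Sig x j + ε * Sig x k| * (R * β j)) := by
          rw [hT', Finset.mul_sum]; exact Finset.sum_congr rfl fun x _ => by ring
      _ ≤ _ := Finset.sum_le_sum hterm
  have hsplit2 : ∑ j' ∈ S, (Sig j' j + ε * Sig j' k) * β j'
      = A * β j + ∑ x ∈ S.erase j, (Sig x j + ε * Sig x k) * β x := by
    rw [← Finset.add_sum_erase S _ hj]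
  rw [hsum, hsplit2]
  have hfin : δ < A * β j - (R * β j) * T' := by
    have h1 : (R * T' + δ / ρ) * β j < A * β j :=
      mul_lt_mul_of_pos_right hkey hβjpos
    have h2 : δ < (δ / ρ) * β j := by
      have : (δ / ρ) * ρ < (δ / ρ) * β j :=
        mul_lt_mul_of_pos_left hjρ (div_pos hδ hρ)
      rwa [div_mul_cancel₀ δ (ne_of_gt hρ)] at this
    nlinarith
  linarith

/-- Theorem (Population MR consistency, sufficiency): if `Σ ∈ MRI_S(δ/ρ; R)` then population
marginal regression recovers the support uniformly over `Γ_{S,ρ,R}` with slack `δ`. -/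
theorem mri_sufficient_for_population_MR {p : ℕ} (Sig : Matrix (Fin p) (Fin p) ℝ)
    (S : Finset (Fin p)) (hSym : Sig.IsSymm) (hPSD : Sig.PosSemidef)
    (hdiag : ∀ i, Sig i i = 1) (hS : S.Nonempty)
    (ρ δ R : ℝ) (hρ : 0 < ρ) (hδ : 0 < δ) (hR : 1 ≤ R)
    (hMRI : MRI Sig S (δ / ρ) R) :
    ∀ β ∈ Gamma S ρ R, ∀ j ∈ S, ∀ k ∉ S,
      |Sig.mulVec β k| + δ < |Sig.mulVec β j| := by
  rintro β ⟨hβ0, hβmin, hβmax⟩ j hj k hk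
  have hjabs : ρ < |β j| := hβmin j hj
  rcases lt_or_ge 0 (β j) with hpos | hneg
  · have hjρ : ρ < β j := by rwa [abs_of_pos hpos] at hjabs
    have h1 := mri_helper Sig S hSym hdiag ρ δ R hρ hδ hR hMRI β hβ0 hβmax j hj hjρ k hk 1 (Or.inl rfl)
    have h2 := mri_helper Sig S hSym hdiag ρ δ R hρ hδ hR hMRI β hβ0 hβmax j hj hjρ k hk (-1) (Or.inr rfl)
    have hle := le_abs_self (Sig.mulVec β j)
    rcases abs_cases (Sig.mulVec β k) with ⟨he, _⟩ | ⟨he, _⟩ <;> linarith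
  · -- apply the helper to -β
    have hneg' : β j < 0 := by
      rcases lt_or_eq_of_le hneg with h | h
      · exact h
      · exfalso; rw [h, abs_zero] at hjabs; linarith
    have hβ0' : ∀ k' ∉ S, (-β) k' = 0 := fun k' hk' => by simp [hβ0 k' hk']
    have hβmax' : ∀ a ∈ S, ∀ b ∈ S, |(-β) a| ≤ R * |(-β) b| := by
      intro a ha b hb; simpa using hβmax a ha b hb
    have hjρ : ρ < (-β) j := by
      have : |β j| = -β j := abs_of_neg hneg'
      simpa [this] using hjabs
    have h1 := mri_helper Sig S hSym hdiag ρ δ R hρ hδ hR hMRI (-β) hβ0' hβmax' j hj hjρ k hk 1 (Or.inl rfl)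
    have h2 := mri_helper Sig S hSym hdiag ρ δ R hρ hδ hR hMRI (-β) hβ0' hβmax' j hj hjρ k hk (-1) (Or.inr rfl)
    rw [Matrix.mulVec_neg] at h1 h2
    simp only [Pi.neg_apply] at h1 h2
    have hle : -(Sig.mulVec β j) ≤ |Sig.mulVec β j| := neg_le_abs _
    rcases abs_cases (Sig.mulVec β k) with ⟨he, _⟩ | ⟨he, _⟩ <;> linarith
end
end

section
/- Let Σ ∈ ℝ^{p×p} be symmetric with unit diagonal, let S ⊆ {1,…,p} be nonempty with Σ_{SS} = I, and let R ∈ [1,∞), δ' ≥ 0. Then Σ ∈ MRI_S(δ'; R) if and only if for every k ∉ S one has ∑_{j∈S} |Σ_{jk}| < (1/R)·(1 − δ') + (1 − 1/R)·min_{j∈S} |Σ_{jk}|. -/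
open Matrix BigOperators

noncomputable section

/-- Lemma: when `Σ_{SS} = I`, MR incoherence is equivalent to
`∑_{j∈S} |Σ_{jk}| < (1/R)(1 - δ') + (1 - 1/R) min_{j∈S} |Σ_{jk}|` for all `k ∉ S`. -/
theorem mri_iff_of_identity_block {p : ℕ} (Sig : Matrix (Fin p) (Fin p) ℝ)
    (S : Finset (Fin p)) (hSym : Sig.IsSymm) (hdiag : ∀ i, Sig i i = 1) (hS : S.Nonempty)
    (hSSid : ∀ j ∈ S, ∀ j' ∈ S, Sig j j' = if j = j' then 1 else 0)
    (R δ' : ℝ) (hR : 1 ≤ R) (hδ' : 0 ≤ δ') :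
    MRI Sig S δ' R ↔
      ∀ k ∉ S, ∑ j ∈ S, |Sig j k| <
        (1 / R) * (1 - δ') + (1 - 1 / R) * S.inf' hS (fun j => |Sig j k|) := by
  have hR0 : (0:ℝ) < R := by linarith
  have hRne : R ≠ 0 := ne_of_gt hR0
  have h1R : (0:ℝ) < 1 + R := by linarith
  have clear : ∀ A B : ℝ, ((R/(1+R))*A + δ'/(1+R) < B ↔ R*A + δ' < B*(1+R)) := by
    intro A B
    rw [div_mul_eq_mul_div, ← add_div, div_lt_iff₀ h1R]
  have rhsdiv : ∀ y : ℝ, (1/R)*(1-δ') + (1-1/R)*y = (1-δ'+(R-1)*y)/R := by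
    intro y; field_simp
  have keyp : ∀ j ∈ S, ∀ k : Fin p, (∑ j' ∈ S, |Sig j' j + Sig j' k|)
      = |1 + Sig j k| + ((∑ j' ∈ S, |Sig j' k|) - |Sig j k|) := by
    intro j hj k
    rw [← Finset.add_sum_erase _ _ hj, ← Finset.add_sum_erase _ (fun j' => |Sig j' k|) hj,
      hdiag j]
    have : ∀ j' ∈ S.erase j, |Sig j' j + Sig j' k| = |Sig j' k| := by
      intro j' hj'
      rw [hSSid j' (Finset.mem_of_mem_erase hj') j hj,
        if_neg (Finset.ne_of_mem_erase hj'), zero_add]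
    rw [Finset.sum_congr rfl this]
    ring
  have keym : ∀ j ∈ S, ∀ k : Fin p, (∑ j' ∈ S, |Sig j' j - Sig j' k|)
      = |1 - Sig j k| + ((∑ j' ∈ S, |Sig j' k|) - |Sig j k|) := by
    intro j hj k
    rw [← Finset.add_sum_erase _ _ hj, ← Finset.add_sum_erase _ (fun j' => |Sig j' k|) hj,
      hdiag j]
    have : ∀ j' ∈ S.erase j, |Sig j' j - Sig j' k| = |Sig j' k| := by
      intro j' hj'
      rw [hSSid j' (Finset.mem_of_mem_erase hj') j hj,
        if_neg (Finset.ne_of_mem_erase hj'), zero_sub, abs_neg]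
    rw [Finset.sum_congr rfl this]
    ring
  constructor
  · intro hM k hk
    obtain ⟨j0, hj0, hinf⟩ := S.exists_mem_eq_inf' hS (fun j => |Sig j k|)
    rw [hinf]
    set T := ∑ j ∈ S, |Sig j k| with hT
    set x := Sig j0 k with hx
    obtain ⟨h1, h2⟩ := hM j0 hj0 k hk
    rw [keyp j0 hj0 k, hdiag j0] at h1
    rw [keym j0 hj0 k, hdiag j0] at h2
    have hxT : |x| ≤ T := Finset.single_le_sum (fun i _ => abs_nonneg (Sig i k)) hj0
    have hs1 : (0:ℝ) ≤ |1 + x| + (T - |x|) := by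
      have := abs_nonneg (1 + x); linarith
    have hs2 : (0:ℝ) ≤ |1 - x| + (T - |x|) := by
      have := abs_nonneg (1 - x); linarith
    have hRR : 0 ≤ R / (1 + R) := by positivity
    have hdd : 0 ≤ δ' / (1 + R) := by positivity
    have hp1 : 0 < 1 + x := lt_of_le_of_lt (by nlinarith) h1
    have hp2 : 0 < 1 - x := lt_of_le_of_lt (by nlinarith) h2
    rw [abs_of_pos hp1, clear] at h1
    rw [abs_of_pos hp2, clear] at h2
    rw [rhsdiv, lt_div_iff₀ hR0]
    rcases abs_cases x with ⟨he, _⟩ | ⟨he, _⟩ <;> nlinarith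
  · intro hyp j hj k hk
    have h := hyp k hk
    set T := ∑ j ∈ S, |Sig j k| with hT
    set x := Sig j k with hx
    have hinf_le : S.inf' hS (fun j => |Sig j k|) ≤ |x| :=
      Finset.inf'_le _ hj
    have h1R' : (0:ℝ) ≤ 1 - 1/R := by
      rw [sub_nonneg, div_le_one hR0]; exact hR
    have hkey : T < (1/R)*(1-δ') + (1-1/R)*|x| :=
      lt_of_lt_of_le h (by nlinarith)
    rw [rhsdiv, lt_div_iff₀ hR0] at hkey
    have hxT : |x| ≤ T := Finset.single_le_sum (fun i _ => abs_nonneg (Sig i k)) hj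
    have hxlt : |x| < 1 := by nlinarith
    obtain ⟨hm1, hm2⟩ := abs_lt.mp hxlt
    constructor
    · rw [keyp j hj k, hdiag j, abs_of_pos (by linarith : (0:ℝ) < 1 + x), clear]
      nlinarith [neg_abs_le x, le_abs_self x]
    · rw [keym j hj k, hdiag j, abs_of_pos (by linarith : (0:ℝ) < 1 - x), clear]
      nlinarith [neg_abs_le x, le_abs_self x]
end
end

section
/- Let Σ ∈ ℝ^{p×p} be symmetric with unit diagonal, and let S ⊆ {1,…,p} with |S| ≥ 2 and S ≠ {1,…,p}. (i) If δ' ≥ 1, then there is no Σ with Σ ∈ MRI_S(δ'; R) for every R ∈ [1,∞). (ii) If δ' ∈ [0,1), then Σ ∈ MRI_S(δ'; R) for every R ∈ [1,∞) if and only if Σ_{SS} = I and Σ_{jk} = 0 for every j ∈ S and k ∉ S. -/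
open Matrix BigOperators

noncomputable section

private lemma pair_ge_x (x y : ℝ) : 2*|x| ≤ |x+y| + |x-y| := by
  have h := abs_add_le (x+y) (x-y)
  rw [show x+y+(x-y) = 2*x by ring, abs_mul, abs_two] at h
  exact h

private lemma lemC {p : ℕ} (Sig : Matrix (Fin p) (Fin p) ℝ) (S : Finset (Fin p))
    (hdiag : ∀ i, Sig i i = 1) (δ' R : ℝ) (hR : 1 ≤ R)
    (hm : MRI Sig S δ' R) {j k : Fin p} (hj : j ∈ S) (hk : k ∉ S) :
    R * (∑ j' ∈ S, (|Sig j' j + Sig j' k| + |Sig j' j - Sig j' k|)) + 2*δ' < 2*(1+R) := by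
  obtain ⟨h1, h2⟩ := hm j hj k hk
  have hR0 : (0:ℝ) < 1 + R := by linarith
  rw [Finset.sum_add_distrib]
  set T := ∑ j' ∈ S, |Sig j' j + Sig j' k| with hT
  set T' := ∑ j' ∈ S, |Sig j' j - Sig j' k| with hT'
  rw [hdiag j] at h1 h2
  have key : (R * (T + T') + 2*δ') / (1+R) < 2 := by
    have heq : (R * (T + T') + 2*δ') / (1+R)
        = (R/(1+R)*T + δ'/(1+R)) + (R/(1+R)*T' + δ'/(1+R)) := by
      field_simp; ring
    rw [heq]; linarith
  rw [div_lt_iff₀ hR0] at key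
  linarith

private lemma cge2 {p : ℕ} (Sig : Matrix (Fin p) (Fin p) ℝ) (S : Finset (Fin p))
    (hdiag : ∀ i, Sig i i = 1) {j k : Fin p} (hj : j ∈ S) :
    2 ≤ ∑ j' ∈ S, (|Sig j' j + Sig j' k| + |Sig j' j - Sig j' k|) := by
  have hterm : (2:ℝ) ≤ |Sig j j + Sig j k| + |Sig j j - Sig j k| := by
    have := pair_ge_x (Sig j j) (Sig j k)
    rw [hdiag j] at this ⊢
    simpa using this
  calc (2:ℝ) ≤ |Sig j j + Sig j k| + |Sig j j - Sig j k| := hterm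
    _ ≤ _ := Finset.single_le_sum
        (f := fun j' => |Sig j' j + Sig j' k| + |Sig j' j - Sig j' k|)
        (fun i _ => add_nonneg (abs_nonneg _) (abs_nonneg _)) hj

private lemma zero_lemma {p : ℕ} (Sig : Matrix (Fin p) (Fin p) ℝ) (S : Finset (Fin p))
    (hdiag : ∀ i, Sig i i = 1) (δ' : ℝ) (hδ : 0 ≤ δ')
    (hall : ∀ R : ℝ, 1 ≤ R → MRI Sig S δ' R)
    {j k j'' : Fin p} (hj : j ∈ S) (hk : k ∉ S) (hj'' : j'' ∈ S) (hne : j'' ≠ j) :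
    Sig j'' j = 0 ∧ Sig j'' k = 0 := by
  set f : Fin p → ℝ := fun j' => |Sig j' j + Sig j' k| + |Sig j' j - Sig j' k| with hf
  set c : ℝ := ∑ j' ∈ S, f j' with hc
  have hcle : c ≤ 2 := by
    by_contra hcon
    push_neg at hcon
    set R : ℝ := max 1 (4/(c-2)) with hRdef
    have hR1 : 1 ≤ R := le_max_left _ _
    have hlem := lemC Sig S hdiag δ' R hR1 (hall R hR1) hj hk
    have hc2 : 0 < c - 2 := by linarith
    have h4 : 4 ≤ R * (c - 2) := by
      have : 4/(c-2) ≤ R := le_max_right _ _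
      exact (div_le_iff₀ hc2).mp this
    nlinarith
  have hfj : 2 ≤ f j := by
    have h := pair_ge_x (Sig j j) (Sig j k)
    rw [hdiag j] at h
    simp only [hf]
    rw [hdiag j]
    simpa using h
  have hsplit : f j + ∑ j' ∈ S.erase j, f j' = c := Finset.add_sum_erase S f hj
  have hsingle : f j'' ≤ ∑ j' ∈ S.erase j, f j' :=
    Finset.single_le_sum (f := f) (fun i _ => add_nonneg (abs_nonneg _) (abs_nonneg _)) (Finset.mem_erase.mpr ⟨hne, hj''⟩)
  have hfz : f j'' ≤ 0 := by linarith
  have h1 : |Sig j'' j + Sig j'' k| = 0 ∧ |Sig j'' j - Sig j'' k| = 0 := by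
    constructor <;> [skip; skip] <;>
      · have := abs_nonneg (Sig j'' j + Sig j'' k)
        have := abs_nonneg (Sig j'' j - Sig j'' k)
        simp only [hf] at hfz
        linarith
  obtain ⟨ha, hb⟩ := h1
  rw [abs_eq_zero] at ha hb
  constructor <;> linarith

/-- Lemma (`R = ∞`): (i) for `δ' ≥ 1` no matrix satisfies MR incoherence for every `R ≥ 1`;
(ii) for `δ' ∈ [0,1)`, MR incoherence holds for every `R ≥ 1` iff `Σ_{SS} = I` and
`Σ_{S S^c} = 0`. -/
theorem mri_all_R_iff {p : ℕ} (Sig : Matrix (Fin p) (Fin p) ℝ)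
    (S : Finset (Fin p)) (hSym : Sig.IsSymm) (hdiag : ∀ i, Sig i i = 1)
    (hcard : 2 ≤ S.card) (hne : S ≠ Finset.univ) (δ' : ℝ) :
    (1 ≤ δ' → ¬ (∀ R : ℝ, 1 ≤ R → MRI Sig S δ' R)) ∧
    (0 ≤ δ' → δ' < 1 →
      ((∀ R : ℝ, 1 ≤ R → MRI Sig S δ' R) ↔
        ((∀ j ∈ S, ∀ j' ∈ S, Sig j j' = if j = j' then 1 else 0) ∧
          ∀ j ∈ S, ∀ k ∉ S, Sig j k = 0))) := by
  obtain ⟨j0, hj0⟩ : S.Nonempty := Finset.card_pos.mp (by omega)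
  obtain ⟨k0, hk0⟩ : ∃ k, k ∉ S := by
    by_contra h
    push_neg at h
    exact hne (Finset.eq_univ_iff_forall.mpr h)
  constructor
  · intro hδ hall
    have h := lemC Sig S hdiag δ' 1 le_rfl (hall 1 le_rfl) hj0 hk0
    have h2 := cge2 Sig S hdiag (k := k0) hj0
    linarith
  · intro hδ0 hδ1
    constructor
    · intro hall
      constructor
      · intro j hj j' hj'
        by_cases hjj : j = j'
        · subst hjj; simp [hdiag j]
        · rw [if_neg hjj]
          exact (zero_lemma Sig S hdiag δ' hδ0 hall hj' hk0 hj hjj).1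
      · intro j hj k hk
        obtain ⟨j1, hj1, hj1ne⟩ := Finset.exists_mem_ne (s := S) (by omega) j
        exact (zero_lemma Sig S hdiag δ' hδ0 hall hj1 hk hj (Ne.symm hj1ne)).2
    · rintro ⟨h1, h2⟩ R hR j hj k hk
      have hR0 : (0:ℝ) < 1 + R := by linarith
      have hvals : ∀ j' ∈ S, Sig j' j = if j' = j then (1:ℝ) else 0 :=
        fun j' hj' => h1 j' hj' j hj
      have hT : ∑ j' ∈ S, |Sig j' j + Sig j' k| = 1 := by
        have : ∀ j' ∈ S, |Sig j' j + Sig j' k| = if j' = j then (1:ℝ) else 0 := by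
          intro j' hj'
          rw [h2 j' hj' k hk, hvals j' hj', add_zero]
          split <;> simp
        rw [Finset.sum_congr rfl this, Finset.sum_ite_eq' S j (fun _ => (1:ℝ)), if_pos hj]
      have hT' : ∑ j' ∈ S, |Sig j' j - Sig j' k| = 1 := by
        have : ∀ j' ∈ S, |Sig j' j - Sig j' k| = if j' = j then (1:ℝ) else 0 := by
          intro j' hj'
          rw [h2 j' hj' k hk, hvals j' hj', sub_zero]
          split <;> simp
        rw [Finset.sum_congr rfl this, Finset.sum_ite_eq' S j (fun _ => (1:ℝ)), if_pos hj]
      have hjj : Sig j j = 1 := hdiag j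
      have hjk : Sig j k = 0 := h2 j hj k hk
      have hkey : R / (1+R) * 1 + δ' / (1+R) < 1 := by
        have heq : R / (1+R) * 1 + δ' / (1+R) = (R + δ') / (1+R) := by
          field_simp
        rw [heq, div_lt_one hR0]
        linarith
      constructor
      · rw [hT, hjj, hjk]; linarith
      · rw [hT', hjj, hjk]; linarith
end
end

section
/- Let Σ ∈ ℝ^{p×p} be symmetric positive semidefinite with unit diagonal, let S ⊆ {1,…,p} be nonempty with s = |S|, and let λ_s > 0 be such that λ_s² is the smallest eigenvalue of Σ_{SS}. Then there exists j ∈ S such that for every k ∉ S and for both choices of sign, |Σ_{jj} ± Σ_{jk}| ≤ λ_s·√s + (1/2)·∑_{j'∈S} |Σ_{j'j} ± Σ_{j'k}|. -/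
open Matrix BigOperators

noncomputable section


private lemma sum_quad_expand {n : ℕ} (Sig : Matrix (Fin n) (Fin n) ℝ) (y z : Fin n → ℝ)
    (t : ℝ) :
    ∑ i, (t * y i - z i) * (t * (∑ i', Sig i i' * y i') - ∑ i', Sig i i' * z i')
      = t ^ 2 * (∑ i, y i * ∑ i', Sig i i' * y i')
        - t * (∑ i, y i * ∑ i', Sig i i' * z i')
        - t * (∑ i, z i * ∑ i', Sig i i' * y i')
        + (∑ i, z i * ∑ i', Sig i i' * z i') := by
  have h : ∀ i, (t * y i - z i) * (t * (∑ i', Sig i i' * y i') - ∑ i', Sig i i' * z i')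
      = t ^ 2 * (y i * ∑ i', Sig i i' * y i') - t * (y i * ∑ i', Sig i i' * z i')
        - t * (z i * ∑ i', Sig i i' * y i') + z i * (∑ i', Sig i i' * z i') := fun i => by ring
  simp_rw [h]
  rw [Finset.sum_add_distrib, Finset.sum_sub_distrib, Finset.sum_sub_distrib,
    ← Finset.mul_sum, ← Finset.mul_sum, ← Finset.mul_sum]

/-- Proposition: if `λ_s² > 0` is the smallest eigenvalue of `Σ_{SS}`, then there exists
`j ∈ S` such that for all `k ∉ S` and both signs,
`|Σ_{jj} ± Σ_{jk}| ≤ λ_s √s + (1/2) ‖Σ_{Sj} ± Σ_{Sk}‖₁`. -/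
theorem exists_row_small_eigenvalue_bound {p : ℕ} (Sig : Matrix (Fin p) (Fin p) ℝ)
    (S : Finset (Fin p)) (hSym : Sig.IsSymm) (hPSD : Sig.PosSemidef)
    (hdiag : ∀ i, Sig i i = 1) (hS : S.Nonempty) (lam : ℝ) (hlam : 0 < lam)
    (hmin : IsLeast {μ : ℝ | ∃ v : {x // x ∈ S} → ℝ, v ≠ 0 ∧
        (Sig.submatrix (fun a : {x // x ∈ S} => (a : Fin p))
          (fun a : {x // x ∈ S} => (a : Fin p))).mulVec v = μ • v} (lam ^ 2)) :
    ∃ j ∈ S, ∀ k ∉ S,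
      |Sig j j + Sig j k| ≤ lam * Real.sqrt S.card
          + (1 / 2) * ∑ j' ∈ S, |Sig j' j + Sig j' k| ∧
      |Sig j j - Sig j k| ≤ lam * Real.sqrt S.card
          + (1 / 2) * ∑ j' ∈ S, |Sig j' j - Sig j' k| := by
  classical
  obtain ⟨⟨v, hv0, hveq⟩, -⟩ := hmin
  have hsym' : ∀ a c, Sig a c = Sig c a := by
    intro a c
    have := congrFun (congrFun hSym c) a
    simpa [Matrix.transpose_apply] using this
  have hQ : ∀ y : Fin p → ℝ, 0 ≤ ∑ i, y i * ∑ i', Sig i i' * y i' := by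
    intro y
    have := hPSD.dotProduct_mulVec_nonneg y
    simpa [dotProduct, Matrix.mulVec] using this
  set ψ : Fin p → ℝ := fun i => if h : i ∈ S then v ⟨i, h⟩ else 0 with hψdef
  have hψ0 : ∀ i ∉ S, ψ i = 0 := by intro i hi; simp [hψdef, hi]
  have hψ_eq : ∀ i ∈ S, ∑ i', Sig i i' * ψ i' = lam ^ 2 * ψ i := by
    intro i hi
    have h1 : ∑ i' ∈ S, Sig i i' * ψ i' = ∑ i', Sig i i' * ψ i' :=
      Finset.sum_subset (S.subset_univ) (fun x _ hx => by simp [hψ0 x hx])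
    have h3 := congrFun hveq ⟨i, hi⟩
    simp only [Matrix.mulVec, dotProduct, Matrix.submatrix_apply, Pi.smul_apply,
      smul_eq_mul] at h3
    rw [← h1, ← Finset.sum_coe_sort S (fun i' => Sig i i' * ψ i')]
    have hψi : ψ i = v ⟨i, hi⟩ := by simp [hψdef, hi]
    rw [hψi, ← h3]
    exact Finset.sum_congr rfl fun a _ => by simp [hψdef, a.2]
  -- choose j maximizing |ψ|
  obtain ⟨a0, -, ha0⟩ := Finset.exists_max_image S.attach (fun a => |v a|)
    (Finset.attach_nonempty_iff.mpr hS)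
  set j : Fin p := (a0 : Fin p) with hjdef
  have hj : j ∈ S := a0.2
  have hψj : ψ j = v a0 := by simp [hψdef, hj, hjdef]
  have hψjne : ψ j ≠ 0 := by
    rw [hψj]
    intro h
    apply hv0
    funext a
    have h2 := ha0 a (Finset.mem_attach _ _)
    rw [h, abs_zero] at h2
    exact abs_eq_zero.mp (le_antisymm h2 (abs_nonneg _))
  have hψmax : ∀ i, |ψ i| ≤ |ψ j| := by
    intro i
    by_cases hi : i ∈ S
    · have : ψ i = v ⟨i, hi⟩ := by simp [hψdef, hi]
      rw [this, hψj]
      exact ha0 ⟨i, hi⟩ (Finset.mem_attach _ _)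
    · rw [hψ0 i hi, abs_zero]; exact abs_nonneg _
  -- the vector b (made opaque)
  obtain ⟨b, hbj, hb0, hble, hbA⟩ : ∃ b : Fin p → ℝ, b j = 1 / 2 ∧ (∀ i ∉ S, b i = 0) ∧
      (∀ i, |b i| ≤ 1 / 2) ∧ (∀ i ∈ S, ∑ i', Sig i i' * b i' = lam ^ 2 * b i) := by
    refine ⟨fun i => ψ i / (2 * ψ j), by field_simp, ?_, ?_, ?_⟩
    · intro i hi; simp [hψ0 i hi]
    · intro i
      rw [abs_div, abs_mul, div_le_iff₀ (by positivity), abs_two]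
      calc |ψ i| ≤ |ψ j| := hψmax i
        _ = 1 / 2 * (2 * |ψ j|) := by ring
    · intro i hi
      have h5 : ∀ i', Sig i i' * (ψ i' / (2 * ψ j)) = (Sig i i' * ψ i') / (2 * ψ j) :=
        fun i' => by ring
      simp_rw [h5]
      rw [← Finset.sum_div, hψ_eq i hi]
      ring
  clear hψ_eq hψmax hψj hψ0 ha0 hveq hv0
  -- bound on quadratic form of b
  have hQb : (∑ i, b i * ∑ i', Sig i i' * b i') ≤ lam ^ 2 * S.card / 4 := by
    have h1 : ∑ i, b i * ∑ i', Sig i i' * b i' = ∑ i ∈ S, b i * ∑ i', Sig i i' * b i' :=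
      (Finset.sum_subset (S.subset_univ) (fun x _ hx => by simp [hb0 x hx])).symm
    rw [h1]
    have h2 : ∀ i ∈ S, b i * ∑ i', Sig i i' * b i' = lam ^ 2 * (b i) ^ 2 := by
      intro i hi; rw [hbA i hi]; ring
    rw [Finset.sum_congr rfl h2]
    have h3 : ∀ i ∈ S, lam ^ 2 * (b i) ^ 2 ≤ lam ^ 2 * (1 / 4) := by
      intro i _
      have h5 := hble i
      have h4 : (b i) ^ 2 ≤ 1 / 4 := by nlinarith [abs_nonneg (b i), sq_abs (b i)]
      nlinarith [sq_nonneg lam]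
    calc ∑ i ∈ S, lam ^ 2 * (b i) ^ 2 ≤ ∑ i ∈ S, lam ^ 2 * (1 / 4) :=
          Finset.sum_le_sum h3
      _ = lam ^ 2 * S.card / 4 := by
          rw [Finset.sum_const, nsmul_eq_mul]; ring
  -- sign vectors (made opaque)
  have key : ∀ k ∉ S, ∀ ε : ℝ, ε = 1 ∨ ε = -1 →
      |Sig j j + ε * Sig j k| ≤ lam * Real.sqrt S.card
        + (1 / 2) * ∑ j' ∈ S, |Sig j' j + ε * Sig j' k| := by
    intro k hk ε hε
    have hε2 : ε ^ 2 = 1 := by rcases hε with h | h <;> simp [h]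
    have hcard : (0:ℝ) < S.card := by exact_mod_cast Finset.card_pos.mpr hS
    set L : ℝ := lam * Real.sqrt S.card with hLdef
    have hL : 0 < L := mul_pos hlam (Real.sqrt_pos.mpr hcard)
    have hL2 : L ^ 2 = lam ^ 2 * S.card := by
      rw [hLdef, mul_pow, Real.sq_sqrt hcard.le]
    have hjk : j ≠ k := fun h => hk (h ▸ hj)
    have hkj : k ≠ j := fun h => hjk h.symm
    obtain ⟨xd, hxd1, hxd2⟩ : ∃ xd : ℝ → Fin p → ℝ,
        (∀ (δ : ℝ) (f : Fin p → ℝ), ∑ i, xd δ i * f i = f j + δ * f k) ∧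
        (∀ (δ : ℝ) (f : Fin p → ℝ), ∑ i, f i * xd δ i = f j + δ * f k) := by
      refine ⟨fun δ i => (if i = j then 1 else 0) + (if i = k then δ else 0), ?_, ?_⟩
      · intro δ f
        have h1 : ∀ x : Fin p, ((if x = j then (1:ℝ) else 0) + if x = k then δ else 0) * f x
            = (if x = j then f x else 0) + (if x = k then δ * f x else 0) := by
          intro x; by_cases h1 : x = j <;> by_cases h2 : x = k <;> simp [h1, h2, hjk, hkj] <;> ring
        simp_rw [h1, Finset.sum_add_distrib, Finset.sum_ite_eq', Finset.mem_univ, if_true]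
      · intro δ f
        have h1 : ∀ x : Fin p, f x * ((if x = j then (1:ℝ) else 0) + if x = k then δ else 0)
            = (if x = j then f x else 0) + (if x = k then δ * f x else 0) := by
          intro x; by_cases h1 : x = j <;> by_cases h2 : x = k <;> simp [h1, h2, hjk, hkj] <;> ring
        simp_rw [h1, Finset.sum_add_distrib, Finset.sum_ite_eq', Finset.mem_univ, if_true]
    have hC : ∀ (δ : ℝ) (i : Fin p), ∑ i', Sig i i' * xd δ i' = Sig i j + δ * Sig i k :=
      fun δ i => hxd2 δ (fun i' => Sig i i')
    have hQxd : ∀ δ : ℝ, δ ^ 2 = 1 →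
        (∑ i, xd δ i * ∑ i', Sig i i' * xd δ i') = 2 + 2 * (δ * Sig j k) := by
      intro δ hδ
      have h1 : ∀ i, (∑ i', Sig i i' * xd δ i') = Sig i j + δ * Sig i k := hC δ
      calc ∑ i, xd δ i * ∑ i', Sig i i' * xd δ i'
          = ∑ i, xd δ i * (Sig i j + δ * Sig i k) := by
            exact Finset.sum_congr rfl fun i _ => by rw [h1 i]
        _ = (Sig j j + δ * Sig j k) + δ * (Sig k j + δ * Sig k k) :=
            hxd1 δ (fun i => Sig i j + δ * Sig i k)
        _ = 2 + 2 * (δ * Sig j k) := by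
            rw [hdiag j, hdiag k, hsym' k j]; nlinarith [hδ]
    have habs : ∀ δ : ℝ, δ ^ 2 = 1 → 0 ≤ 1 + δ * Sig j k := by
      intro δ hδ
      have h0 := hQ (xd δ)
      rw [hQxd δ hδ] at h0
      linarith
    have hwj0 : 0 ≤ 1 + ε * Sig j k := habs ε hε2
    have hQx4 : (∑ i, xd ε i * ∑ i', Sig i i' * xd ε i') ≤ 4 := by
      rw [hQxd ε hε2]
      have := habs (-ε) (by nlinarith)
      nlinarith
    obtain ⟨w, hw⟩ : ∃ w : Fin p → ℝ, ∀ i, w i = Sig i j + ε * Sig i k := ⟨_, fun _ => rfl⟩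
    obtain ⟨B, hBdef⟩ : ∃ B : ℝ, B = ∑ i ∈ S, b i * w i := ⟨_, rfl⟩
    have hBuniv : ∑ i, b i * w i = B := by
      rw [hBdef]
      exact (Finset.sum_subset (S.subset_univ) (fun x _ hx => by simp [hb0 x hx])).symm
    have hcross : ∑ i, xd ε i * ∑ i', Sig i i' * b i' = B := by
      rw [hxd1 ε (fun i => ∑ i', Sig i i' * b i'), ← hBuniv]
      rw [Finset.mul_sum, ← Finset.sum_add_distrib]
      refine Finset.sum_congr rfl fun i' _ => ?_
      have hwi : w i' = Sig i' j + ε * Sig i' k := hw i'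
      rw [hwi, hsym' j i', hsym' k i']
      ring
    have hBC : ∑ i, b i * ∑ i', Sig i i' * xd ε i' = B := by
      rw [← hBuniv]
      exact Finset.sum_congr rfl fun i _ => by rw [hC ε i, hw i]
    have hexp : ∀ t : ℝ, 0 ≤ t ^ 2 * (∑ i, b i * ∑ i', Sig i i' * b i')
        - 2 * t * B + (∑ i, xd ε i * ∑ i', Sig i i' * xd ε i') := by
      intro t
      have h0 := hQ (fun i => t * b i - xd ε i)
      have hinner : ∀ i, ∑ i', Sig i i' * (t * b i' - xd ε i')
          = t * (∑ i', Sig i i' * b i') - (∑ i', Sig i i' * xd ε i') := by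
        intro i
        rw [Finset.mul_sum, ← Finset.sum_sub_distrib]
        exact Finset.sum_congr rfl fun i' _ => by ring
      simp only [hinner] at h0
      rw [sum_quad_expand Sig b (xd ε) t, hBC, hcross] at h0
      linarith
    -- B ≤ L
    have hBL : B ≤ L := by
      have h0 := hexp (4 / L)
      have ht : (0:ℝ) < 4 / L := by positivity
      have htL : (4 / L) * L = 4 := by field_simp
      have hQb' : (∑ i, b i * ∑ i', Sig i i' * b i') ≤ L ^ 2 / 4 := by
        rw [hL2]; exact hQb
      have hq1 : (4 / L) ^ 2 * (∑ i, b i * ∑ i', Sig i i' * b i')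
          ≤ (4 / L) ^ 2 * (L ^ 2 / 4) := mul_le_mul_of_nonneg_left hQb' (sq_nonneg _)
      have h2 : (4 / L) ^ 2 * L ^ 2 = 16 := by
        rw [div_pow]
        rw [div_mul_cancel₀ _ (pow_ne_zero 2 hL.ne')]
        norm_num
      have h4 : (4 / L) ^ 2 * (L ^ 2 / 4) = 4 := by
        rw [show (4 / L) ^ 2 * (L ^ 2 / 4) = ((4 / L) ^ 2 * L ^ 2) / 4 from by ring, h2]
        norm_num
      have h5 : (4 / L) * B ≤ (4 / L) * L := by
        rw [htL]
        nlinarith [h0, hq1, hQx4, h4]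
      exact (mul_le_mul_iff_right₀ ht).mp h5
    -- lower bound for B
    have hterm : ∀ i ∈ S, 0 ≤ b i * w i + |w i| / 2 := by
      intro i _
      have h1 := hble i
      have h2 : -(|b i| * |w i|) ≤ b i * w i := by
        rw [← abs_mul]; exact neg_abs_le _
      have h3 : |b i| * |w i| ≤ (1 / 2) * |w i| :=
        mul_le_mul_of_nonneg_right h1 (abs_nonneg _)
      linarith
    have hjterm : w j ≤ b j * w j + |w j| / 2 := by
      rw [hbj]
      have := le_abs_self (w j)
      linarith
    have hsum : b j * w j + |w j| / 2 ≤ ∑ i ∈ S, (b i * w i + |w i| / 2) :=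
      Finset.single_le_sum hterm hj
    have hsumsplit : ∑ i ∈ S, (b i * w i + |w i| / 2) = B + (1 / 2) * ∑ i ∈ S, |w i| := by
      rw [Finset.sum_add_distrib, hBdef]
      congr 1
      rw [Finset.mul_sum]
      exact Finset.sum_congr rfl fun i _ => by ring
    have hwjval : w j = Sig j j + ε * Sig j k := hw j
    have hwjnn : 0 ≤ w j := by rw [hwjval, hdiag j]; exact hwj0
    have habsj : |Sig j j + ε * Sig j k| = w j := by
      rw [← hwjval]; exact abs_of_nonneg hwjnn
    rw [habsj]
    have hwS : ∑ j' ∈ S, |Sig j' j + ε * Sig j' k| = ∑ i ∈ S, |w i| :=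
      Finset.sum_congr rfl fun i _ => by rw [hw i]
    rw [hwS]
    have hfin : w j ≤ B + (1 / 2) * ∑ i ∈ S, |w i| := by
      rw [← hsumsplit]; exact le_trans hjterm hsum
    linarith
  refine ⟨j, hj, fun k hk => ⟨?_, ?_⟩⟩
  · have := key k hk 1 (Or.inl rfl)
    simpa using this
  · have := key k hk (-1) (Or.inr rfl)
    have heq : ∀ a c : ℝ, a + (-1) * c = a - c := fun a c => by ring
    simp only [heq] at this
    exact this
end
end

section
/- Let Σ ∈ ℝ^{p×p} be symmetric positive semidefinite with unit diagonal, let S ⊆ {1,…,p} be nonempty with S ≠ {1,…,p}, set s = |S|, and let λ_s > 0 be such that λ_s² is the smallest eigenvalue of Σ_{SS}. If λ_s ≤ δ'/(√s·(R+1)) for some δ' > 0 and R ≥ 1, then Σ ∉ MRI_S(δ'; R). -/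
/-!
Adding the two MR-incoherence inequalities for `j ∈ S` and any `k ∉ S`, and using
`|a + b| + |a - b| ≥ 2|a|`, bounds every column sum of `|Σ_SS|` by `(1 + R - δ') / R`.
Gershgorin's theorem for columns then keeps every eigenvalue of `Σ_SS` above `δ'`,
whereas `λ_s ≤ δ' / 2 < 1` forces `λ_s² < δ'`.
-/

open Matrix BigOperators

noncomputable section

open Module.End

section Gershgorin

variable {n K : Type*} [Fintype n] [DecidableEq n]

theorem Matrix.hasEigenvalue_toLin'_transpose_iff {R : Type*} [CommRing R] [IsDomain R]
    {A : Matrix n n R} {μ : R} :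
    HasEigenvalue (toLin' Aᵀ) μ ↔ HasEigenvalue (toLin' A) μ := by
  simp only [hasEigenvalue_iff_isRoot_charpoly, charpoly_toLin', charpoly_transpose]

theorem eigenvalue_mem_ball_col [NormedField K] {A : Matrix n n K} {μ : K}
    (hμ : HasEigenvalue (toLin' A) μ) :
    ∃ k, μ ∈ Metric.closedBall (A k k) (∑ j ∈ Finset.univ.erase k, ‖A j k‖) :=
  eigenvalue_mem_ball (A := Aᵀ) (hasEigenvalue_toLin'_transpose_iff.mpr hμ)

end Gershgorin

namespace MRI

variable {p : ℕ} {Sig : Matrix (Fin p) (Fin p) ℝ} {S : Finset (Fin p)} {δ' R : ℝ}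
  {j k : Fin p}

theorem mul_sum_abs_add_lt (h : MRI Sig S δ' R) (hR : 0 ≤ R) (hj : j ∈ S) (hk : k ∉ S) :
    R * ∑ j' ∈ S, |Sig j' j| + δ' < (1 + R) * Sig j j := by
  obtain ⟨hplus, hminus⟩ := h j hj k hk
  have h1R : 0 < 1 + R := by linarith
  have htri : 2 * ∑ j' ∈ S, |Sig j' j| ≤
      ∑ j' ∈ S, |Sig j' j + Sig j' k| + ∑ j' ∈ S, |Sig j' j - Sig j' k| := by
    rw [Finset.mul_sum, ← Finset.sum_add_distrib]
    refine Finset.sum_le_sum fun j' _ => ?_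
    calc 2 * |Sig j' j| = |(Sig j' j + Sig j' k) + (Sig j' j - Sig j' k)| := by
          rw [← abs_two, ← abs_mul]; ring_nf
      _ ≤ _ := abs_add_le _ _
  rw [div_mul_eq_mul_div, ← add_div, div_lt_iff₀ h1R] at hplus hminus
  nlinarith

theorem lt_diag (h : MRI Sig S δ' R) (hR : 0 ≤ R) (hj : j ∈ S) (hk : k ∉ S) :
    δ' < Sig j j := by
  have hdiag_le : Sig j j ≤ ∑ j' ∈ S, |Sig j' j| :=
    (le_abs_self _).trans <|
      Finset.single_le_sum (f := fun j' => |Sig j' j|) (fun _ _ => abs_nonneg _) hj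
  nlinarith [h.mul_sum_abs_add_lt hR hj hk]

theorem lt_of_hasEigenvalue (h : MRI Sig S δ' R) (hdiag : ∀ i, Sig i i = 1) (hk : k ∉ S)
    (hR : 1 ≤ R) {μ : ℝ}
    (hμ : HasEigenvalue (toLin' (Sig.submatrix ((↑) : S → Fin p) (↑))) μ) : δ' < μ := by
  obtain ⟨j, hj⟩ := eigenvalue_mem_ball_col hμ
  set T := ∑ j' ∈ S, |Sig j' j|
  have hball : |μ - 1| ≤ T - 1 := by
    rw [Metric.mem_closedBall, Real.dist_eq, Finset.sum_erase_eq_sub (Finset.mem_univ j)] at hj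
    simp only [submatrix_apply, Real.norm_eq_abs, hdiag, abs_one] at hj
    rwa [Finset.sum_coe_sort S fun j' => |Sig j' j|] at hj
  have hT := h.mul_sum_abs_add_lt (by linarith) j.2 hk
  rw [hdiag] at hT
  nlinarith [abs_le.mp hball, mul_nonneg (sub_nonneg.mpr hR) ((abs_nonneg _).trans hball)]

end MRI

theorem not_mri_of_small_eigenvalue_general {p : ℕ} (Sig : Matrix (Fin p) (Fin p) ℝ)
    (S : Finset (Fin p)) (hdiag : ∀ i, Sig i i = 1) (hne : S ≠ Finset.univ)
    (lam : ℝ) (hlam : 0 < lam)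
    (hmin : IsLeast {μ : ℝ | ∃ v : {x // x ∈ S} → ℝ, v ≠ 0 ∧
        (Sig.submatrix (fun a : {x // x ∈ S} => (a : Fin p))
          (fun a : {x // x ∈ S} => (a : Fin p))).mulVec v = μ • v} (lam ^ 2))
    (δ' R : ℝ) (hR : 1 ≤ R)
    (hsmall : lam ≤ δ' / (Real.sqrt S.card * (R + 1))) :
    ¬ MRI Sig S δ' R := by
  intro hmri
  obtain ⟨k, hk⟩ : ∃ k, k ∉ S := by simpa [Finset.eq_univ_iff_forall] using hne
  obtain ⟨v, hv, hveq⟩ := hmin.1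
  obtain ⟨j, -⟩ := Function.ne_iff.mp hv
  have hlam_sq : δ' < lam ^ 2 := hmri.lt_of_hasEigenvalue hdiag hk hR <|
    hasEigenvalue_of_hasEigenvector ⟨mem_eigenspace_iff.mpr (by rwa [toLin'_apply]), hv⟩
  have hδ'_lt : δ' < 1 := hdiag j ▸ hmri.lt_diag (by linarith) j.2 hk
  have hdenom : 2 ≤ Real.sqrt S.card * (R + 1) := by
    have : 1 ≤ Real.sqrt S.card :=
      Real.one_le_sqrt.mpr (Nat.one_le_cast.mpr (Finset.card_pos.mpr ⟨j, j.2⟩))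
    nlinarith
  have hlam_half : 2 * lam ≤ δ' := by
    rw [le_div_iff₀ (by linarith)] at hsmall
    nlinarith
  nlinarith

/-- Proposition: if the square root `λ_s` of the smallest eigenvalue of `Σ_{SS}` satisfies
`λ_s ≤ δ'/(√s (R+1))`, then `Σ ∉ MRI_S(δ'; R)`. -/
theorem not_mri_of_small_eigenvalue {p : ℕ} (Sig : Matrix (Fin p) (Fin p) ℝ)
    (S : Finset (Fin p)) (hSym : Sig.IsSymm) (hPSD : Sig.PosSemidef)
    (hdiag : ∀ i, Sig i i = 1) (hS : S.Nonempty) (hne : S ≠ Finset.univ)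
    (lam : ℝ) (hlam : 0 < lam)
    (hmin : IsLeast {μ : ℝ | ∃ v : {x // x ∈ S} → ℝ, v ≠ 0 ∧
        (Sig.submatrix (fun a : {x // x ∈ S} => (a : Fin p))
          (fun a : {x // x ∈ S} => (a : Fin p))).mulVec v = μ • v} (lam ^ 2))
    (δ' R : ℝ) (hδ' : 0 < δ') (hR : 1 ≤ R)
    (hsmall : lam ≤ δ' / (Real.sqrt S.card * (R + 1))) :
    ¬ MRI Sig S δ' R :=
  not_mri_of_small_eigenvalue_general Sig S hdiag hne lam hlam hmin δ' R hR hsmall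
end
end

section
/- There exist universal constants C > 0, c₁ > 0 and c₂ > 0 with the following property. Let Σ ∈ ℝ^{p×p} be symmetric positive semidefinite with unit diagonal, σ > 0, and β ∈ Γ_{S,ρ,R} with ‖β‖₂ ≤ t. Let (x_i, ε_i), i = 1,…,n, be i.i.d. with x_i ∼ N(0, Σ) on ℝ^p and ε_i ∼ N(0, σ²) independent of x_i, and set y_i = βᵀx_i + ε_i, r = Σβ, and r̂_j = (1/n)·∑_{i=1}^n x_{ij}·y_i for j = 1,…,p. If log p / n ≤ C, then with probability at least 1 − 2p^{−c₁}, max_{j∈[p]} |r̂_j − r_j| ≤ (ξ(Σ; Γ_{S,ρ,R}, t) + σ)·√(c₂·log p / n). -/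
open Matrix BigOperators MeasureTheory ProbabilityTheory

noncomputable section

/-- `ξ(Σ; Γ_{S,ρ,R}, t) = sup { √(βᵀ Σ β) : β ∈ Γ_{S,ρ,R}, ‖β‖₂ ≤ t }`. -/
def xi {p : ℕ} (Sig : Matrix (Fin p) (Fin p) ℝ) (S : Finset (Fin p)) (ρ R t : ℝ) : ℝ :=
  sSup {r : ℝ | ∃ β ∈ Gamma S ρ R,
    Real.sqrt (∑ i, β i ^ 2) ≤ t ∧ r = Real.sqrt (β ⬝ᵥ Sig.mulVec β)}

open Real MeasureTheory ProbabilityTheory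
open scoped NNReal ENNReal

lemma lintegral_exp_sq_gaussian (m : ℝ) (v : ℝ≥0) (l : ℝ) (hl : 2*l*v < 1) :
    ∫⁻ z, ENNReal.ofReal (Real.exp (l * z^2)) ∂(gaussianReal m v) =
      ENNReal.ofReal (Real.exp (l*m^2/(1-2*l*v)) / Real.sqrt (1-2*l*v)) := by
  by_cases hv : v = 0
  · subst hv
    rw [gaussianReal_zero_var, lintegral_dirac' _ (by fun_prop)]
    norm_num
  · have hv0 : (0:ℝ) < v := lt_of_le_of_ne v.coe_nonneg (by exact_mod_cast (Ne.symm hv))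
    have h1 : (0:ℝ) < 1 - 2*l*v := by linarith
    set b : ℝ := (1 - 2*l*v) / (2*v) with hb
    have hbpos : 0 < b := div_pos h1 (by linarith)
    set m' : ℝ := m / (1 - 2*l*v) with hm'
    set K : ℝ := l*m^2/(1-2*l*v) with hK
    have hsq : ∀ z : ℝ, l * z^2 + (-(z-m)^2 / (2*(v:ℝ))) = -b*(z-m')^2 + K := by
      intro z
      rw [hb, hm', hK]
      obtain ⟨D, hD⟩ : ∃ D, D = 1 - 2*l*(v:ℝ) := ⟨_, rfl⟩
      have hD0 : D ≠ 0 := hD ▸ h1.ne'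
      have hv' := hv0.ne'
      have hl : l = (1-D)/(2*v) := by field_simp; linarith
      rw [← hD, hl]
      field_simp
      ring
    rw [gaussianReal_of_var_ne_zero _ hv,
      lintegral_withDensity_eq_lintegral_mul _ (measurable_gaussianPDF _ _) (by fun_prop)]
    have hpt : ∀ z : ℝ, (gaussianPDF m v * fun z => ENNReal.ofReal (Real.exp (l * z^2))) z
        = ENNReal.ofReal ((√(2 * π * v))⁻¹ * Real.exp (-b*(z-m')^2 + K)) := by
      intro z
      simp only [Pi.mul_apply, gaussianPDF, gaussianPDFReal]
      rw [← ENNReal.ofReal_mul (by positivity)]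
      congr 1
      rw [mul_assoc, ← Real.exp_add]
      congr 2
      rw [← hsq z]; ring
    rw [lintegral_congr hpt]
    have hint : Integrable (fun z : ℝ => (√(2 * π * v))⁻¹ * Real.exp (-b*(z-m')^2 + K)) := by
      simp_rw [Real.exp_add, ← mul_assoc]
      exact (((integrable_exp_neg_mul_sq hbpos).comp_sub_right m').const_mul _).mul_const _
    rw [← ofReal_integral_eq_lintegral_ofReal hint (ae_of_all _ (fun z => by positivity))]
    congr 1
    rw [integral_const_mul]
    have : ∀ z : ℝ, Real.exp (-b*(z-m')^2 + K) = Real.exp K * Real.exp (-b*(z-m')^2) := by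
      intro z; rw [Real.exp_add]; ring
    simp_rw [this, integral_const_mul]
    rw [integral_sub_right_eq_self (μ := volume) (fun z => Real.exp (-b*z^2)) m',
      integral_gaussian]
    have h2v : (0:ℝ) < 2 * π * v := by positivity
    have hsb : Real.sqrt (π / b) = Real.sqrt (2*π*v) / Real.sqrt (1-2*l*v) := by
      have hpb : π / b = 2*π*v / (1-2*l*v) := by rw [hb]; field_simp
      rw [hpb, Real.sqrt_div h2v.le]
    rw [hsb]
    have hs2 : Real.sqrt (2*π*v) ≠ 0 := by positivity
    field_simp


lemma lintegral_exp_sq_add_gaussian {Ω : Type} [MeasurableSpace Ω] {P : Measure Ω}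
    [IsProbabilityMeasure P] {X Y : Ω → ℝ} (hX : Measurable X) (hY : Measurable Y)
    (hind : IndepFun X Y P) (a b : ℝ≥0)
    (hmX : P.map X = gaussianReal 0 a) (hmY : P.map Y = gaussianReal 0 b)
    (l : ℝ) (hl : 2*l*((a:ℝ)+b) < 1) :
    ∫⁻ ω, ENNReal.ofReal (Real.exp (l * (X ω + Y ω)^2)) ∂P
      = ENNReal.ofReal ((Real.sqrt (1 - 2*l*((a:ℝ)+b)))⁻¹) := by
  have hlb : 2*l*(b:ℝ) < 1 := by
    rcases le_or_gt l 0 with h|h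
    · have : 2*l*(b:ℝ) ≤ 0 := by
        have := b.coe_nonneg; nlinarith
      linarith
    · have := a.coe_nonneg; nlinarith
  have h1b : (0:ℝ) < 1 - 2*l*b := by linarith
  set l' : ℝ := l / (1 - 2*l*b) with hl'
  have hl'a : 2*l'*(a:ℝ) < 1 := by
    rw [hl']
    rw [show 2 * (l / (1 - 2*l*(b:ℝ))) * (a:ℝ) = 2*l*a / (1-2*l*b) by ring]
    rw [div_lt_one h1b]
    linarith

  have hprod : P.map (fun ω => (X ω, Y ω)) = (gaussianReal 0 a).prod (gaussianReal 0 b) := by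
    rw [← hmX, ← hmY]
    exact (indepFun_iff_map_prod_eq_prod_map_map hX.aemeasurable hY.aemeasurable).mp hind
  calc ∫⁻ ω, ENNReal.ofReal (Real.exp (l * (X ω + Y ω)^2)) ∂P
      = ∫⁻ q : ℝ × ℝ, ENNReal.ofReal (Real.exp (l * (q.1 + q.2)^2))
          ∂((gaussianReal 0 a).prod (gaussianReal 0 b)) := by
        rw [← hprod, lintegral_map (by fun_prop) (hX.prodMk hY)]
    _ = ∫⁻ u : ℝ, ∫⁻ w : ℝ, ENNReal.ofReal (Real.exp (l * (u + w)^2))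
          ∂(gaussianReal 0 b) ∂(gaussianReal 0 a) := by
        rw [lintegral_prod _ (by fun_prop)]
    _ = ∫⁻ u : ℝ, ENNReal.ofReal (Real.exp (l'*u^2)) * ENNReal.ofReal ((Real.sqrt (1-2*l*b))⁻¹)
          ∂(gaussianReal 0 a) := by
        congr 1; ext u
        have hmap : (gaussianReal 0 b).map (fun w => w + u) = gaussianReal u b := by
          rw [gaussianReal_map_add_const]; rw [zero_add]
        have : ∫⁻ w : ℝ, ENNReal.ofReal (Real.exp (l * (u + w)^2)) ∂(gaussianReal 0 b)
            = ∫⁻ z : ℝ, ENNReal.ofReal (Real.exp (l * z^2)) ∂(gaussianReal u b) := by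
          rw [← hmap, lintegral_map (by fun_prop) (by fun_prop)]
          congr 1; ext w; rw [add_comm]
        rw [this, lintegral_exp_sq_gaussian u b l hlb, div_eq_mul_inv,
          ENNReal.ofReal_mul (by positivity)]
        congr 3
        rw [hl']; field_simp
    _ = ENNReal.ofReal ((Real.sqrt (1-2*l'*a))⁻¹) * ENNReal.ofReal ((Real.sqrt (1-2*l*b))⁻¹) := by
        rw [lintegral_mul_const _ (by fun_prop), lintegral_exp_sq_gaussian 0 a l' hl'a]
        norm_num
    _ = ENNReal.ofReal ((Real.sqrt (1 - 2*l*((a:ℝ)+b)))⁻¹) := by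
        rw [← ENNReal.ofReal_mul (by positivity), ← mul_inv, ← Real.sqrt_mul (by linarith)]
        congr 3
        rw [hl']; field_simp; ring

lemma sqrt_exp_eq (x : ℝ) : Real.sqrt (Real.exp x) = Real.exp (x/2) := by
  rw [show Real.exp x = (Real.exp (x/2))^2 by rw [sq, ← Real.exp_add]; ring_nf]
  exact Real.sqrt_sq (le_of_lt (Real.exp_pos _))

lemma inv_sqrt_le_exp_aux {u : ℝ} (h : |u| ≤ 1/2) :
    (Real.sqrt (1-u))⁻¹ ≤ Real.exp (u/2 + u^2) := by
  obtain ⟨hl, hr⟩ := abs_le.mp h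
  have h1 : (0:ℝ) < 1 - u := by linarith
  have hkey : (1-u)⁻¹ ≤ Real.exp (u + 2*u^2) := by
    have he := Real.add_one_le_exp (u + 2*u^2)
    have hprod : 1 ≤ (1 + (u + 2*u^2)) * (1-u) := by nlinarith
    rw [inv_eq_one_div, div_le_iff₀ h1]
    nlinarith [Real.exp_pos (u + 2*u^2)]
  have hs : Real.sqrt ((1-u)⁻¹) ≤ Real.sqrt (Real.exp (u + 2*u^2)) :=
    Real.sqrt_le_sqrt hkey
  rw [Real.sqrt_inv, sqrt_exp_eq] at hs
  convert hs using 2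
  ring

lemma chisq_mgf_facts {Ω : Type} [MeasurableSpace Ω] {P : Measure Ω}
    [IsProbabilityMeasure P] {V : Ω → ℝ} (hV : Measurable V) {w : ℝ} (hw : 0 < w)
    (hli : ∀ l : ℝ, |l| * w ≤ 1/4 →
      ∫⁻ ω, ENNReal.ofReal (Real.exp (l * V ω^2)) ∂P
        = ENNReal.ofReal ((Real.sqrt (1-2*l*w))⁻¹))
    {l : ℝ} (hl : |l| * w ≤ 1/4) :
    Integrable (fun ω => Real.exp (l * V ω^2)) P ∧
      mgf (fun ω => V ω^2) P l ≤ Real.exp (l*w + 4*l^2*w^2) := by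
  have habs : |2*l*w| ≤ 1/2 := by
    rw [abs_mul, abs_mul, abs_two, abs_of_pos hw]
    calc 2 * |l| * w ≤ 2 * (1/4) := by
          rw [mul_assoc]; exact mul_le_mul_of_nonneg_left hl (by norm_num)
      _ = 1/2 := by norm_num
  have hint : Integrable (fun ω => Real.exp (l * V ω^2)) P := by
    refine ⟨(((hV.pow_const 2).const_mul l).exp).aestronglyMeasurable, ?_⟩
    rw [hasFiniteIntegral_iff_ofReal (ae_of_all _ fun ω => (Real.exp_pos _).le)]
    rw [hli l hl]
    exact ENNReal.ofReal_lt_top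
  refine ⟨hint, ?_⟩
  have hmgf : mgf (fun ω => V ω^2) P l = (Real.sqrt (1-2*l*w))⁻¹ := by
    rw [mgf, integral_eq_lintegral_of_nonneg_ae (ae_of_all _ fun ω => (Real.exp_pos _).le)
      ((((hV.pow_const 2).const_mul l).exp).aestronglyMeasurable)]
    rw [hli l hl, ENNReal.toReal_ofReal (by positivity)]
  rw [hmgf]
  calc (Real.sqrt (1-2*l*w))⁻¹ ≤ Real.exp ((2*l*w)/2 + (2*l*w)^2) := inv_sqrt_le_exp_aux habs
    _ = Real.exp (l*w + 4*l^2*w^2) := by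
        congr 1; ring

lemma chisq_tail {Ω : Type} [MeasurableSpace Ω] {P : Measure Ω}
    [IsProbabilityMeasure P] {n : ℕ} (V : Fin n → Ω → ℝ) (hmeas : ∀ i, Measurable (V i))
    (hindep : iIndepFun (fun i ω => V i ω^2) P)
    {w : ℝ} (hw : 0 < w)
    (hmgf : ∀ i, ∀ l : ℝ, |l| * w ≤ 1/4 →
      ∫⁻ ω, ENNReal.ofReal (Real.exp (l * V i ω^2)) ∂P
        = ENNReal.ofReal ((Real.sqrt (1-2*l*w))⁻¹))
    {δ : ℝ} (hδ : 0 < δ) (hδ2 : δ ≤ 2*w) :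
    P {ω | (n:ℝ) * δ ≤ |(∑ i, V i ω^2) - n*w|}
      ≤ ENNReal.ofReal (2 * Real.exp (-n*δ^2/(16*w^2))) := by
  set lam : ℝ := δ / (8*w^2) with hlam
  have hlampos : 0 < lam := by positivity
  have hlb : |lam| * w ≤ 1/4 := by
    rw [abs_of_pos hlampos, hlam]
    rw [div_mul_eq_mul_div, div_le_iff₀ (by positivity)]
    nlinarith
  have hlbneg : |(-lam)| * w ≤ 1/4 := by rwa [abs_neg]
  set Sq : Fin n → Ω → ℝ := fun i ω => V i ω^2 with hSq
  have hSqmeas : ∀ i, Measurable (Sq i) := fun i => (hmeas i).pow_const 2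
  have hfacts : ∀ (l : ℝ), |l| * w ≤ 1/4 → ∀ i,
      Integrable (fun ω => Real.exp (l * Sq i ω)) P ∧
        mgf (Sq i) P l ≤ Real.exp (l*w + 4*l^2*w^2) :=
    fun l hl i => chisq_mgf_facts (hmeas i) hw (hmgf i) hl
  -- mgf of the sum bounds
  have hmgfsum : ∀ (l : ℝ), |l| * w ≤ 1/4 →
      mgf (∑ i, Sq i) P l ≤ Real.exp (n * (l*w + 4*l^2*w^2)) := by
    intro l hl
    rw [hindep.mgf_sum hSqmeas]
    calc ∏ i : Fin n, mgf (Sq i) P l ≤ ∏ _i : Fin n, Real.exp (l*w + 4*l^2*w^2) :=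
          Finset.prod_le_prod (fun i _ => mgf_nonneg) (fun i _ => (hfacts l hl i).2)
      _ = Real.exp (n * (l*w + 4*l^2*w^2)) := by
          rw [Finset.prod_const, ← Real.exp_nat_mul]; norm_num
  have hintsum : ∀ (l : ℝ), |l| * w ≤ 1/4 →
      Integrable (fun ω => Real.exp (l * (∑ i, Sq i) ω)) P :=
    fun l hl => hindep.integrable_exp_mul_sum hSqmeas (fun i _ => (hfacts l hl i).1)
  have hexp : (n:ℝ) * (4*lam^2*w^2 - lam*δ) = -n*δ^2/(16*w^2) := by
    rw [hlam]; field_simp; ring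
  -- upper tail
  have hup : (P {ω | (n:ℝ)*(w+δ) ≤ (∑ i, Sq i) ω}).toReal
      ≤ Real.exp (-n*δ^2/(16*w^2)) := by
    calc (P {ω | (n:ℝ)*(w+δ) ≤ (∑ i, Sq i) ω}).toReal
        ≤ Real.exp (-lam * ((n:ℝ)*(w+δ))) * mgf (∑ i, Sq i) P lam :=
          measure_ge_le_exp_mul_mgf _ hlampos.le (hintsum lam hlb)
      _ ≤ Real.exp (-lam * ((n:ℝ)*(w+δ))) * Real.exp (n * (lam*w + 4*lam^2*w^2)) := by
          exact mul_le_mul_of_nonneg_left (hmgfsum lam hlb) (Real.exp_pos _).le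
      _ = Real.exp ((n:ℝ) * (4*lam^2*w^2 - lam*δ)) := by
          rw [← Real.exp_add]; congr 1; ring
      _ = Real.exp (-n*δ^2/(16*w^2)) := by rw [hexp]
  -- lower tail
  have hdown : (P {ω | (n:ℝ)*(δ-w) ≤ (-(∑ i, Sq i)) ω}).toReal
      ≤ Real.exp (-n*δ^2/(16*w^2)) := by
    have hintneg : Integrable (fun ω => Real.exp (lam * (-(∑ i, Sq i)) ω)) P := by
      have := hintsum (-lam) hlbneg
      simpa [neg_mul, mul_neg] using this
    calc (P {ω | (n:ℝ)*(δ-w) ≤ (-(∑ i, Sq i)) ω}).toReal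
        ≤ Real.exp (-lam * ((n:ℝ)*(δ-w))) * mgf (-(∑ i, Sq i)) P lam :=
          measure_ge_le_exp_mul_mgf _ hlampos.le hintneg
      _ = Real.exp (-lam * ((n:ℝ)*(δ-w))) * mgf (∑ i, Sq i) P (-lam) := by rw [mgf_neg]
      _ ≤ Real.exp (-lam * ((n:ℝ)*(δ-w))) * Real.exp (n * ((-lam)*w + 4*(-lam)^2*w^2)) :=
          mul_le_mul_of_nonneg_left (hmgfsum (-lam) hlbneg) (Real.exp_pos _).le
      _ = Real.exp ((n:ℝ) * (4*lam^2*w^2 - lam*δ)) := by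
          rw [← Real.exp_add]; congr 1; ring
      _ = Real.exp (-n*δ^2/(16*w^2)) := by rw [hexp]
  -- combine
  have hsub : {ω | (n:ℝ) * δ ≤ |(∑ i, V i ω^2) - n*w|}
      ⊆ {ω | (n:ℝ)*(w+δ) ≤ (∑ i, Sq i) ω} ∪ {ω | (n:ℝ)*(δ-w) ≤ (-(∑ i, Sq i)) ω} := by
    intro ω hω
    simp only [Set.mem_setOf_eq] at hω
    have hsum : (∑ i, Sq i) ω = ∑ i, V i ω^2 := by simp [hSq]
    rcases le_or_gt ((n:ℝ)*δ) ((∑ i, V i ω^2) - n*w) with h|h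
    · left; simp only [Set.mem_setOf_eq, hsum]; linarith
    · right
      have : (n:ℝ)*δ ≤ -((∑ i, V i ω^2) - n*w) := by
        rcases abs_cases ((∑ i, V i ω^2) - n*w) with ⟨he, _⟩|⟨he, _⟩
        · rw [he] at hω; linarith
        · rw [he] at hω; linarith
      simp only [Set.mem_setOf_eq, Pi.neg_apply, hsum]
      linarith
  have hPA : ∀ (A : Set Ω), (P A).toReal ≤ Real.exp (-n*δ^2/(16*w^2)) →
      P A ≤ ENNReal.ofReal (Real.exp (-n*δ^2/(16*w^2))) := by
    intro A hA
    rw [← ENNReal.ofReal_toReal (measure_ne_top P A)]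
    exact ENNReal.ofReal_le_ofReal hA
  calc P {ω | (n:ℝ) * δ ≤ |(∑ i, V i ω^2) - n*w|}
      ≤ P ({ω | (n:ℝ)*(w+δ) ≤ (∑ i, Sq i) ω} ∪ {ω | (n:ℝ)*(δ-w) ≤ (-(∑ i, Sq i)) ω}) :=
        measure_mono hsub
    _ ≤ P {ω | (n:ℝ)*(w+δ) ≤ (∑ i, Sq i) ω} + P {ω | (n:ℝ)*(δ-w) ≤ (-(∑ i, Sq i)) ω} :=
        measure_union_le _ _
    _ ≤ ENNReal.ofReal (Real.exp (-n*δ^2/(16*w^2)))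
        + ENNReal.ofReal (Real.exp (-n*δ^2/(16*w^2))) :=
        add_le_add (hPA _ hup) (hPA _ hdown)
    _ = ENNReal.ofReal (2 * Real.exp (-n*δ^2/(16*w^2))) := by
        rw [← ENNReal.ofReal_add (Real.exp_pos _).le (Real.exp_pos _).le]
        congr 1; ring

open Matrix in
lemma quad_expand {p : ℕ} (Sig : Matrix (Fin p) (Fin p) ℝ) (u v : Fin p → ℝ) (s t : ℝ) :
    (s • u + t • v) ⬝ᵥ Sig.mulVec (s • u + t • v)
      = s^2*(u ⬝ᵥ Sig.mulVec u) + s*t*(u ⬝ᵥ Sig.mulVec v)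
        + s*t*(v ⬝ᵥ Sig.mulVec u) + t^2*(v ⬝ᵥ Sig.mulVec v) := by
  simp [Matrix.mulVec_add, Matrix.mulVec_smul, dotProduct_add, add_dotProduct,
    smul_dotProduct, dotProduct_smul, smul_eq_mul]
  ring

open Matrix in
lemma psd_cs {p : ℕ} (Sig : Matrix (Fin p) (Fin p) ℝ) (hsym : Sig.IsSymm) (hpsd : Sig.PosSemidef)
    (u v : Fin p → ℝ) :
    (u ⬝ᵥ Sig.mulVec v)^2 ≤ (u ⬝ᵥ Sig.mulVec u) * (v ⬝ᵥ Sig.mulVec v) := by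
  have hsymm : ∀ a b : Fin p → ℝ, a ⬝ᵥ Sig.mulVec b = b ⬝ᵥ Sig.mulVec a := by
    intro a b
    rw [Matrix.dotProduct_mulVec, ← Matrix.mulVec_transpose, hsym.eq, dotProduct_comm]
  have hq : ∀ t : ℝ, 0 ≤ (v ⬝ᵥ Sig.mulVec v) * (t*t) + (2*(u ⬝ᵥ Sig.mulVec v))*t
      + (u ⬝ᵥ Sig.mulVec u) := by
    intro t
    have h0 := hpsd.dotProduct_mulVec_nonneg ((1:ℝ) • u + t • v)
    rw [show star ((1:ℝ) • u + t • v) = ((1:ℝ) • u + t • v) from rfl] at h0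
    rw [quad_expand Sig u v 1 t] at h0
    rw [hsymm v u] at h0
    calc (0:ℝ) ≤ _ := h0
      _ = _ := by push_cast; ring
  have hd := discrim_le_zero hq
  rw [discrim] at hd
  nlinarith [hd]

open Matrix in
lemma per_pair_tail {Ω : Type} [MeasurableSpace Ω] {P : Measure Ω} [IsProbabilityMeasure P]
    {p n : ℕ} (Sig : Matrix (Fin p) (Fin p) ℝ) (hpsd : Sig.PosSemidef) {σ : ℝ}
    (x : Fin n → Ω → Fin p → ℝ) (ε : Fin n → Ω → ℝ)
    (hxm : ∀ i, Measurable (x i)) (hεm : ∀ i, Measurable (ε i))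
    (hiid : iIndepFun (fun i ω => (x i ω, ε i ω)) P)
    (hgaussx : ∀ i, ∀ l : Fin p → ℝ,
      Measure.map (fun ω => ∑ j, l j * x i ω j) P =
        gaussianReal 0 (Real.toNNReal (l ⬝ᵥ Sig.mulVec l)))
    (hgaussε : ∀ i, Measure.map (ε i) P = gaussianReal 0 (Real.toNNReal (σ ^ 2)))
    (hindxε : ∀ i, IndepFun (x i) (ε i) P)
    (lv : Fin p → ℝ) (d : ℝ)
    {w : ℝ} (hwdef : w = lv ⬝ᵥ Sig.mulVec lv + d^2*σ^2) (hw0 : 0 < w)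
    {δ : ℝ} (hδpos : 0 < δ) (hδle : δ ≤ 2*w) :
    P {ω | (n:ℝ)*δ ≤ |(∑ i, (∑ k, lv k * x i ω k + d * ε i ω)^2) - n*w|}
      ≤ ENNReal.ofReal (2 * Real.exp (-n*δ^2/(16*w^2))) := by
  have hσ2 : (0:ℝ) ≤ σ^2 := sq_nonneg σ
  have hlvq : (0:ℝ) ≤ lv ⬝ᵥ Sig.mulVec lv := by simpa using hpsd.dotProduct_mulVec_nonneg lv
  set V : Fin n → Ω → ℝ := fun i ω => ∑ k, lv k * x i ω k + d * ε i ω with hV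
  have hVmeas : ∀ i, Measurable (V i) := by
    intro i
    apply Measurable.add
    · exact Finset.measurable_sum _ fun k _ => ((measurable_pi_apply k).comp (hxm i)).const_mul _
    · exact (hεm i).const_mul d
  have hVsqindep : iIndepFun (fun i ω => V i ω^2) P := by
    have hg : ∀ _i : Fin n, Measurable (fun q : (Fin p → ℝ) × ℝ =>
        (∑ k, lv k * q.1 k + d * q.2)^2) := by
      intro _
      apply Measurable.pow_const
      apply Measurable.add
      · exact Finset.measurable_sum _ fun k _ =>
          ((measurable_pi_apply k).comp measurable_fst).const_mul _
      · exact measurable_snd.const_mul d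
    exact hiid.comp _ hg
  -- NNReal variances
  set a : ℝ≥0 := Real.toNNReal (lv ⬝ᵥ Sig.mulVec lv) with ha
  set b : ℝ≥0 := Real.toNNReal (d^2 * σ^2) with hb
  have haab : (a:ℝ) + (b:ℝ) = w := by
    rw [ha, hb, hwdef, Real.coe_toNNReal _ hlvq,
      Real.coe_toNNReal _ (mul_nonneg (sq_nonneg d) hσ2)]
  have hmgf : ∀ i, ∀ l : ℝ, |l| * w ≤ 1/4 →
      ∫⁻ ω, ENNReal.ofReal (Real.exp (l * V i ω^2)) ∂P
        = ENNReal.ofReal ((Real.sqrt (1-2*l*w))⁻¹) := by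
    intro i l hl
    have hcond : 2*l*((a:ℝ)+b) < 1 := by
      rw [haab]
      nlinarith [le_abs_self l, abs_nonneg l, hw0]
    have hmX : P.map (fun ω => ∑ k, lv k * x i ω k) = gaussianReal 0 a := hgaussx i lv
    have hmY : P.map (fun ω => d * ε i ω) = gaussianReal 0 b := by
      have hgm : Measurable (fun z : ℝ => d * z) := by fun_prop
      have h1 : P.map (fun ω => d * ε i ω) = (P.map (ε i)).map (fun z : ℝ => d * z) :=
        (Measure.map_map hgm (hεm i)).symm
      rw [h1, hgaussε i, gaussianReal_map_const_mul d, mul_zero]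
      congr 1
      rw [hb, ← NNReal.coe_inj]
      push_cast [Real.coe_toNNReal _ hσ2, Real.coe_toNNReal _ (mul_nonneg (sq_nonneg d) hσ2)]
      rfl
    have hXm : Measurable (fun ω => ∑ k, lv k * x i ω k) :=
      Finset.measurable_sum _ fun k _ => ((measurable_pi_apply k).comp (hxm i)).const_mul _
    have hYm : Measurable (fun ω => d * ε i ω) := (hεm i).const_mul d
    have hindXY : IndepFun (fun ω => ∑ k, lv k * x i ω k) (fun ω => d * ε i ω) P := by
      have hf : Measurable (fun xv : Fin p → ℝ => ∑ k, lv k * xv k) :=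
        Finset.measurable_sum _ fun k _ => (measurable_pi_apply k).const_mul _
      have hg : Measurable (fun z : ℝ => d * z) := measurable_id.const_mul d
      exact (hindxε i).comp hf hg
    have := lintegral_exp_sq_add_gaussian hXm hYm hindXY a b hmX hmY l hcond
    rw [haab] at this
    exact this
  exact chisq_tail V hVmeas hVsqindep hw0 hmgf hδpos hδle

set_option maxHeartbeats 1000000 in
/-- Lemma (concentration of the sample scores): with i.i.d. Gaussian data,
`‖r̂ - r‖_∞ ≤ (ξ(Σ;Γ_S,t) + σ) √(c₂ log p / n)` with probability at least `1 - 2 p^{-c₁}`. -/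
theorem sample_scores_concentration :
    ∃ C > (0 : ℝ), ∃ c₁ > (0 : ℝ), ∃ c₂ > (0 : ℝ),
      ∀ (p n : ℕ) (Sig : Matrix (Fin p) (Fin p) ℝ) (S : Finset (Fin p))
        (ρ R σ t : ℝ) (β : Fin p → ℝ)
        (Ω : Type) (mΩ : MeasurableSpace Ω) (P : Measure Ω)
        (x : Fin n → Ω → Fin p → ℝ) (ε : Fin n → Ω → ℝ),
        IsProbabilityMeasure P →
        0 < n → Sig.IsSymm → Sig.PosSemidef → (∀ i, Sig i i = 1) →
        0 < ρ → 1 ≤ R → 0 < σ → 0 < t →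
        β ∈ Gamma S ρ R → Real.sqrt (∑ i, β i ^ 2) ≤ t →
        (∀ i, Measurable (x i)) → (∀ i, Measurable (ε i)) →
        -- the pairs (xᵢ, εᵢ), i = 1,…,n, are independent …
        iIndepFun (fun i ω => (x i ω, ε i ω)) P →
        -- … and identically distributed,
        (∀ i i', IdentDistrib (fun ω => (x i ω, ε i ω)) (fun ω => (x i' ω, ε i' ω)) P P) →
        -- each xᵢ ~ N(0, Σ): every linear functional of xᵢ is a centered Gaussian
        -- with the corresponding variance,
        (∀ i, ∀ l : Fin p → ℝ,
          Measure.map (fun ω => ∑ j, l j * x i ω j) P =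
            gaussianReal 0 (Real.toNNReal (l ⬝ᵥ Sig.mulVec l))) →
        -- each εᵢ ~ N(0, σ²),
        (∀ i, Measure.map (ε i) P = gaussianReal 0 (Real.toNNReal (σ ^ 2))) →
        -- xᵢ and εᵢ are independent,
        (∀ i, IndepFun (x i) (ε i) P) →
        Real.log p / n ≤ C →
        ENNReal.ofReal (1 - 2 * (p : ℝ) ^ (-c₁)) ≤
          P {ω | ∀ j : Fin p,
            |(1 / (n : ℝ)) * (∑ i, x i ω j * ((∑ j', β j' * x i ω j') + ε i ω))
                - Sig.mulVec β j|
              ≤ (xi Sig S ρ R t + σ) * Real.sqrt (c₂ * Real.log p / n)} := by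
  refine ⟨1/12, by norm_num, 1, by norm_num, 192, by norm_num, ?_⟩
  intro p n Sig S ρ R σ t β Ω mΩ P x ε hP hn hsym hpsd hdiag hρ hR hσ ht hβΓ hβt hxm hεm
    hiid _hident hgaussx hgaussε hindxε hlogpn
  rcases lt_or_ge (p:ℝ) 2 with hp2|hp2
  · -- p = 0 or p = 1
    have hp01 : p = 0 ∨ p = 1 := by
      have : p < 2 := by exact_mod_cast hp2
      omega
    rcases hp01 with rfl|rfl
    · refine le_trans (le_of_eq ?_) (le_trans (le_of_eq measure_univ.symm)
        (measure_mono (fun ω _ (j : Fin 0) => j.elim0)))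
      rw [Nat.cast_zero, Real.zero_rpow (by norm_num : (-1:ℝ) ≠ 0)]
      norm_num
    · rw [Nat.cast_one, Real.one_rpow]
      rw [show (1:ℝ) - 2*1 = -1 by norm_num, ENNReal.ofReal_of_nonpos (by norm_num)]
      exact bot_le
  -- main case: p ≥ 2
  have hp0 : (0:ℝ) < p := by linarith
  set L : ℝ := Real.log p with hLdef
  have hL : 0 < L := Real.log_pos (by exact_mod_cast hp2)
  have hnR : (0:ℝ) < n := by exact_mod_cast hn
  have hun : 12 * L ≤ n := by
    rw [div_le_div_iff₀ hnR (by norm_num)] at hlogpn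
    linarith
  -- basic quantities
  set q : ℝ := β ⬝ᵥ Sig.mulVec β with hqdef
  have hq0 : 0 ≤ q := by simpa using hpsd.dotProduct_mulVec_nonneg β
  set sy : ℝ := Real.sqrt (q + σ^2) with hsydef
  have hqσ : 0 < q + σ^2 := by positivity
  have hsy : 0 < sy := Real.sqrt_pos.mpr hqσ
  have hsy2 : sy^2 = q + σ^2 := Real.sq_sqrt hqσ.le
  set c : ℝ := Real.sqrt sy with hcdef
  have hc : 0 < c := Real.sqrt_pos.mpr hsy
  have hc2 : c^2 = sy := Real.sq_sqrt hsy.le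
  have hsqq : Real.sqrt q < sy := by
    apply Real.sqrt_lt_sqrt hq0
    nlinarith
  -- xi bound
  have hdotsymm : ∀ a b : Fin p → ℝ, a ⬝ᵥ Sig.mulVec b = b ⬝ᵥ Sig.mulVec a := by
    intro a b
    rw [Matrix.dotProduct_mulVec, ← Matrix.mulVec_transpose, hsym.eq, dotProduct_comm]
  set ej : Fin p → Fin p → ℝ := fun j k => if k = j then 1 else 0 with hejdef
  have hejd : ∀ (j : Fin p) (wv : Fin p → ℝ), (ej j) ⬝ᵥ wv = wv j := by
    intro j wv
    simp [hejdef, dotProduct, ite_mul]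
  have hejQ : ∀ j, (ej j) ⬝ᵥ Sig.mulVec (ej j) = 1 := by
    intro j
    rw [hejd j]
    simp [Matrix.mulVec, dotProduct, mul_ite, hdiag j, hejdef]
  have hentry : ∀ i k, |Sig i k| ≤ 1 := by
    intro i k
    have h1 : (ej i) ⬝ᵥ Sig.mulVec (ej k) = Sig i k := by
      rw [hejd i]
      simp [Matrix.mulVec, dotProduct, mul_ite, hejdef]
    have h2 := psd_cs Sig hsym hpsd (ej i) (ej k)
    rw [h1, hejQ i, hejQ k] at h2
    calc |Sig i k| = Real.sqrt ((Sig i k)^2) := (Real.sqrt_sq_eq_abs _).symm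
      _ ≤ Real.sqrt 1 := Real.sqrt_le_sqrt (by linarith)
      _ = 1 := Real.sqrt_one
  have hxiq : Real.sqrt q ≤ xi Sig S ρ R t := by
    have hbdd : BddAbove {r : ℝ | ∃ β' ∈ Gamma S ρ R,
        Real.sqrt (∑ i, β' i ^ 2) ≤ t ∧ r = Real.sqrt (β' ⬝ᵥ Sig.mulVec β')} := by
      refine ⟨Real.sqrt p * t, ?_⟩
      rintro r ⟨β', _, hβ't, rfl⟩
      have hsum : β' ⬝ᵥ Sig.mulVec β' ≤ (p:ℝ) * t^2 := by
        have h1 : β' ⬝ᵥ Sig.mulVec β' ≤ (∑ i, |β' i|)^2 := by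
          calc β' ⬝ᵥ Sig.mulVec β' ≤ |β' ⬝ᵥ Sig.mulVec β'| := le_abs_self _
            _ ≤ ∑ i, |β' i * (Sig.mulVec β' i)| := Finset.abs_sum_le_sum_abs _ _
            _ ≤ ∑ i, |β' i| * ∑ k, |β' k| := by
                apply Finset.sum_le_sum
                intro i _
                rw [abs_mul]
                apply mul_le_mul_of_nonneg_left _ (abs_nonneg _)
                calc |Sig.mulVec β' i| ≤ ∑ k, |Sig i k * β' k| := by
                      rw [show Sig.mulVec β' i = ∑ k, Sig i k * β' k from rfl]
                      apply Finset.abs_sum_le_sum_abs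
                  _ ≤ ∑ k, |β' k| := by
                      apply Finset.sum_le_sum
                      intro k _
                      rw [abs_mul]
                      calc |Sig i k| * |β' k| ≤ 1 * |β' k| :=
                            mul_le_mul_of_nonneg_right (hentry i k) (abs_nonneg _)
                        _ = |β' k| := one_mul _
            _ = (∑ i, |β' i|)^2 := by rw [← Finset.sum_mul]; ring
        have h2 : (∑ i, |β' i|)^2 ≤ (p:ℝ) * ∑ i, β' i ^2 := by
          have := sq_sum_le_card_mul_sum_sq (s := Finset.univ) (f := fun i => |β' i|)
          simpa [sq_abs] using this
        have h3 : ∑ i, β' i ^2 ≤ t^2 := by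
          have h4 : Real.sqrt (∑ i, β' i^2) ^ 2 ≤ t^2 := by
            apply sq_le_sq' _ hβ't
            have := Real.sqrt_nonneg (∑ i, β' i^2)
            linarith
          rwa [Real.sq_sqrt (by positivity)] at h4
        calc β' ⬝ᵥ Sig.mulVec β' ≤ (p:ℝ) * ∑ i, β' i ^2 := le_trans h1 h2
          _ ≤ (p:ℝ) * t^2 := by nlinarith
      calc Real.sqrt (β' ⬝ᵥ Sig.mulVec β') ≤ Real.sqrt ((p:ℝ) * t^2) :=
            Real.sqrt_le_sqrt hsum
        _ = Real.sqrt p * t := by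
            rw [Real.sqrt_mul (by positivity), Real.sqrt_sq ht.le]
    exact le_csSup hbdd ⟨β, hβΓ, hβt, rfl⟩
  have hxi0 : 0 ≤ xi Sig S ρ R t := le_trans (Real.sqrt_nonneg q) hxiq
  have hsy_le : sy ≤ xi Sig S ρ R t + σ := by
    have h1 : sy ≤ Real.sqrt q + σ := by
      rw [hsydef]
      have h2 : q + σ^2 ≤ (Real.sqrt q + σ)^2 := by
        have := Real.sq_sqrt hq0
        nlinarith [Real.sqrt_nonneg q, hσ.le]
      calc Real.sqrt (q + σ^2) ≤ Real.sqrt ((Real.sqrt q + σ)^2) := Real.sqrt_le_sqrt h2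
        _ = Real.sqrt q + σ := Real.sqrt_sq (by positivity)
    linarith
  -- per-(j,θ) quantities
  set rj : Fin p → ℝ := fun j => Sig.mulVec β j with hrjdef
  have hrjabs : ∀ j, |rj j| ≤ Real.sqrt q := by
    intro j
    have h1 : (ej j) ⬝ᵥ Sig.mulVec β = rj j := hejd j _
    have h2 := psd_cs Sig hsym hpsd (ej j) β
    rw [h1, hejQ j, one_mul] at h2
    calc |rj j| = Real.sqrt ((rj j)^2) := (Real.sqrt_sq_eq_abs _).symm
      _ ≤ Real.sqrt q := Real.sqrt_le_sqrt h2
  set lv : Fin p → ℝ → Fin p → ℝ := fun j θ => c • (ej j) + (θ/c) • β with hlvdef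
  have hlvval : ∀ (j : Fin p) (θ : ℝ), θ = 1 ∨ θ = -1 →
      lv j θ ⬝ᵥ Sig.mulVec (lv j θ) = sy + 2*θ*(rj j) + q/sy := by
    intro j θ hθ
    rw [hlvdef]
    simp only
    rw [quad_expand, hejQ j, hejd j, hdotsymm β (ej j), hejd j]
    have hθ2 : θ^2 = 1 := by rcases hθ with rfl|rfl <;> norm_num
    have : (θ/c)^2 = 1/sy := by
      rw [div_pow, hθ2, hc2]
    rw [this]
    rw [show Sig.mulVec β j = rj j from rfl]
    have hcd : c*(θ/c) = θ := by
      rw [mul_comm]; exact div_mul_cancel₀ θ hc.ne'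
    rw [hcd, hc2]
    ring
  set w : Fin p → ℝ → ℝ := fun j θ => lv j θ ⬝ᵥ Sig.mulVec (lv j θ) + (θ/c)^2*σ^2 with hwdef
  have hwval : ∀ (j : Fin p) (θ : ℝ), θ = 1 ∨ θ = -1 →
      w j θ = 2*sy + 2*θ*(rj j) := by
    intro j θ hθ
    rw [hwdef]
    simp only
    rw [hlvval j θ hθ]
    have hθ2 : θ^2 = 1 := by rcases hθ with rfl|rfl <;> norm_num
    have h1 : (θ/c)^2 = 1/sy := by rw [div_pow, hθ2, hc2]
    rw [h1]
    have key : q/sy + 1/sy*σ^2 = sy := by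
      calc q/sy + 1/sy*σ^2 = (q + σ^2)/sy := by ring
        _ = sy^2/sy := by rw [hsy2]
        _ = sy := by rw [sq, mul_div_assoc, div_self hsy.ne', mul_one]
    linarith [key]
  have hw0 : ∀ (j : Fin p) (θ : ℝ), θ = 1 ∨ θ = -1 → 0 < w j θ := by
    intro j θ hθ
    rw [hwval j θ hθ]
    have h1 := hrjabs j
    have h2 : |θ * rj j| ≤ Real.sqrt q := by
      rcases hθ with rfl|rfl <;> simpa [abs_mul] using h1
    have h3 := abs_le.mp h2
    linarith [hsqq, h3.1, h3.2]
  have hwub : ∀ (j : Fin p) (θ : ℝ), θ = 1 ∨ θ = -1 → w j θ ≤ 4*sy := by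
    intro j θ hθ
    rw [hwval j θ hθ]
    have h1 := hrjabs j
    have h2 : |θ * rj j| ≤ Real.sqrt q := by
      rcases hθ with rfl|rfl <;> simpa [abs_mul] using h1
    have h3 := abs_le.mp h2
    linarith [hsqq, h3.1, h3.2]
  set u : ℝ := 12 * L with hudef
  have hu0 : 0 < u := by positivity
  set s0 : ℝ := Real.sqrt (u / n) with hs0def
  have hs0 : 0 < s0 := Real.sqrt_pos.mpr (by positivity)
  have hs0le : s0 ≤ 1 := by
    rw [hs0def]
    rw [show (1:ℝ) = Real.sqrt 1 from Real.sqrt_one.symm]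
    apply Real.sqrt_le_sqrt
    rw [div_le_one hnR]
    linarith
  set del : Fin p → ℝ → ℝ := fun j θ => 2 * w j θ * s0 with hdeldef
  set V : Fin p → ℝ → Fin n → Ω → ℝ :=
    fun j θ i ω => ∑ k, lv j θ k * x i ω k + (θ/c) * ε i ω with hVdef
  set B : Fin p → ℝ → Set Ω :=
    fun j θ => {ω | (n:ℝ) * del j θ ≤ |(∑ i, V j θ i ω^2) - n * w j θ|} with hBdef
  -- tail bound for each pair
  have htail : ∀ (j : Fin p) (θ : ℝ), θ = 1 ∨ θ = -1 →
      P (B j θ) ≤ ENNReal.ofReal (2 * Real.exp (-3*L)) := by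
    intro j θ hθ
    have hδpos : 0 < del j θ := by
      have := hw0 j θ hθ
      rw [hdeldef]
      positivity
    have hδle : del j θ ≤ 2 * w j θ := by
      rw [hdeldef]
      simp only
      calc 2 * w j θ * s0 ≤ 2 * w j θ * 1 :=
            mul_le_mul_of_nonneg_left hs0le (by linarith [hw0 j θ hθ])
        _ = 2 * w j θ := mul_one _
    have h := per_pair_tail Sig hpsd x ε hxm hεm hiid hgaussx hgaussε hindxε
      (lv j θ) (θ/c) (rfl : w j θ = _) (hw0 j θ hθ) hδpos hδle
    have hexp : -(n:ℝ)*(del j θ)^2/(16*(w j θ)^2) = -3*L := by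
      have hwne : w j θ ≠ 0 := (hw0 j θ hθ).ne'
      have hs02 : s0^2 = u/n := Real.sq_sqrt (by positivity)
      have hgen : ∀ wv : ℝ, wv ≠ 0 → -(n:ℝ)*(2*wv*s0)^2/(16*wv^2) = -3*L := by
        intro wv hwv
        rw [mul_pow, mul_pow, hs02, hudef]
        field_simp
        ring
      rw [hdeldef]
      exact hgen (w j θ) hwne
    rw [hexp] at h
    exact h
  -- union bound
  set bad : Set Ω := ⋃ j : Fin p, (B j 1 ∪ B j (-1)) with hbaddef
  have hBmeas : ∀ (j : Fin p) (θ : ℝ), MeasurableSet (B j θ) := by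
    intro j θ
    apply measurableSet_le measurable_const
    apply Measurable.abs
    apply Measurable.sub_const
    apply Finset.measurable_sum
    intro i _
    apply Measurable.pow_const
    apply Measurable.add
    · exact Finset.measurable_sum _ fun k _ =>
        ((measurable_pi_apply k).comp (hxm i)).const_mul _
    · exact (hεm i).const_mul _
  have hbadmeas : MeasurableSet bad :=
    MeasurableSet.iUnion fun j => (hBmeas j 1).union (hBmeas j (-1))
  have hPbad : P bad ≤ ENNReal.ofReal (2 * (p:ℝ) ^ (-(1:ℝ))) := by
    have h1 : P bad ≤ ∑ j : Fin p, P (B j 1 ∪ B j (-1)) := by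
      rw [hbaddef]
      exact (measure_iUnion_le _).trans (le_of_eq (tsum_fintype _))
    have h2 : ∀ j : Fin p, P (B j 1 ∪ B j (-1))
        ≤ ENNReal.ofReal (4 * Real.exp (-3*L)) := by
      intro j
      calc P (B j 1 ∪ B j (-1)) ≤ P (B j 1) + P (B j (-1)) := measure_union_le _ _
        _ ≤ ENNReal.ofReal (2 * Real.exp (-3*L)) + ENNReal.ofReal (2 * Real.exp (-3*L)) :=
            add_le_add (htail j 1 (Or.inl rfl)) (htail j (-1) (Or.inr rfl))
        _ = ENNReal.ofReal (4 * Real.exp (-3*L)) := by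
            rw [← ENNReal.ofReal_add (by positivity) (by positivity)]
            congr 1; ring
    calc P bad ≤ ∑ j : Fin p, P (B j 1 ∪ B j (-1)) := h1
      _ ≤ ∑ _j : Fin p, ENNReal.ofReal (4 * Real.exp (-3*L)) :=
          Finset.sum_le_sum fun j _ => h2 j
      _ = (p : ℝ≥0∞) * ENNReal.ofReal (4 * Real.exp (-3*L)) := by
          rw [Finset.sum_const, Finset.card_univ, Fintype.card_fin, nsmul_eq_mul]
      _ = ENNReal.ofReal ((p:ℝ) * (4 * Real.exp (-3*L))) := by
          rw [← ENNReal.ofReal_natCast p, ← ENNReal.ofReal_mul (by positivity)]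
      _ ≤ ENNReal.ofReal (2 * (p:ℝ) ^ (-(1:ℝ))) := by
          apply ENNReal.ofReal_le_ofReal
          have hpexp : (p:ℝ) = Real.exp L := (Real.exp_log hp0).symm
          have hrpow : (p:ℝ) ^ (-(1:ℝ)) = Real.exp (-L) := by
            rw [Real.rpow_def_of_pos hp0, ← hLdef]
            norm_num
          rw [hrpow, hpexp]
          have h2e : (2:ℝ) ≤ Real.exp L := by
            rw [← Real.exp_log (show (0:ℝ) < 2 by norm_num)]
            exact Real.exp_le_exp.mpr (Real.log_le_log (by norm_num) hp2)
          have e1 : Real.exp L * Real.exp (-3*L) = Real.exp (-2*L) := by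
            rw [← Real.exp_add]; congr 1; ring
          have e2 : Real.exp (-2*L) * Real.exp L = Real.exp (-L) := by
            rw [← Real.exp_add]; congr 1; ring
          calc Real.exp L * (4 * Real.exp (-3*L)) = 4 * Real.exp (-2*L) := by
                rw [← e1]; ring
            _ ≤ 2 * (Real.exp (-2*L) * Real.exp L) := by
                nlinarith [Real.exp_pos (-2*L)]
            _ = 2 * Real.exp (-L) := by rw [e2]
  -- linear functional expansion
  have hlin : ∀ (j : Fin p) (θ : ℝ) (xv : Fin p → ℝ),
      ∑ k, lv j θ k * xv k = c * xv j + (θ/c) * ∑ k, β k * xv k := by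
    intro j θ xv
    have hterm : ∀ k, lv j θ k * xv k
        = (if k = j then c * xv k else 0) + (θ/c) * (β k * xv k) := by
      intro k
      rw [hlvdef]
      simp only [Pi.add_apply, Pi.smul_apply, smul_eq_mul, hejdef]
      by_cases h : k = j <;> simp [h] <;> ring
    rw [Finset.sum_congr rfl (fun k _ => hterm k), Finset.sum_add_distrib,
      Finset.sum_ite_eq' Finset.univ j (fun k => c * xv k), ← Finset.mul_sum]
    simp
  have hValg : ∀ (j : Fin p) (θ : ℝ) (i : Fin n) (ω : Ω),
      V j θ i ω = c * x i ω j + (θ/c) * ((∑ j', β j' * x i ω j') + ε i ω) := by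
    intro j θ i ω
    rw [hVdef]
    simp only
    rw [hlin j θ (x i ω)]
    ring
  -- good event inclusion
  have hsubset : badᶜ ⊆ {ω | ∀ j : Fin p,
      |(1 / (n : ℝ)) * (∑ i, x i ω j * ((∑ j', β j' * x i ω j') + ε i ω))
          - Sig.mulVec β j|
        ≤ (xi Sig S ρ R t + σ) * Real.sqrt (192 * L / n)} := by
    intro ω hω
    simp only [hbaddef, Set.compl_iUnion, Set.mem_iInter, Set.mem_compl_iff,
      Set.mem_union, not_or] at hω
    intro j
    obtain ⟨h1, h2⟩ := hω j
    rw [hBdef] at h1 h2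
    simp only [Set.mem_setOf_eq, not_le] at h1 h2
    set y : Fin n → ℝ := fun i => (∑ j', β j' * x i ω j') + ε i ω with hydef
    have hsq4 : ∀ X Y : ℝ, X*Y = (1/4)*((c*X + 1/c*Y)^2 - (c*X + (-1)/c*Y)^2) := by
      intro X Y
      field_simp
      ring
    have hptwise : ∀ i, x i ω j * y i = (1/4) * (V j 1 i ω^2 - V j (-1) i ω^2) := by
      intro i
      have hyi : (∑ j', β j' * x i ω j') + ε i ω = y i := rfl
      rw [hValg j 1 i ω, hValg j (-1) i ω, hyi]
      exact hsq4 (x i ω j) (y i)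
    have hsumid : ∑ i, x i ω j * y i
        = (1/4) * ((∑ i, V j 1 i ω^2) - (∑ i, V j (-1) i ω^2)) := by
      rw [Finset.sum_congr rfl (fun i _ => hptwise i), ← Finset.mul_sum,
        Finset.sum_sub_distrib]
    have hrjid : Sig.mulVec β j = (1/4) * (w j 1 - w j (-1)) := by
      rw [hwval j 1 (Or.inl rfl), hwval j (-1) (Or.inr rfl)]
      rw [show Sig.mulVec β j = rj j from rfl]
      ring
    have hexprid : (1 / (n : ℝ)) * (∑ i, x i ω j * y i) - Sig.mulVec β j
        = (1/(4*n)) * (((∑ i, V j 1 i ω^2) - n * w j 1)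
            - ((∑ i, V j (-1) i ω^2) - n * w j (-1))) := by
      have hgen : ∀ A1 A2 W1 W2 : ℝ,
          (1/(n:ℝ))*((1/4)*(A1 - A2)) - (1/4)*(W1 - W2)
            = (1/(4*(n:ℝ)))*((A1 - n*W1) - (A2 - n*W2)) := by
        intro A1 A2 W1 W2
        field_simp
        ring
      rw [hsumid, hrjid]
      exact hgen _ _ _ _
    have hnd1 : |(∑ i, V j 1 i ω^2) - n * w j 1| ≤ n * del j 1 := le_of_lt h1
    have hnd2 : |(∑ i, V j (-1) i ω^2) - n * w j (-1)| ≤ n * del j (-1) := le_of_lt h2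
    have hbound : |(1 / (n : ℝ)) * (∑ i, x i ω j * y i) - Sig.mulVec β j|
        ≤ 4 * sy * s0 := by
      rw [hexprid, abs_mul]
      have h4n : |1/(4*(n:ℝ))| = 1/(4*n) := abs_of_pos (by positivity)
      rw [h4n]
      have habs : |((∑ i, V j 1 i ω^2) - n * w j 1)
          - ((∑ i, V j (-1) i ω^2) - n * w j (-1))|
          ≤ n * del j 1 + n * del j (-1) :=
        (abs_sub _ _).trans (add_le_add hnd1 hnd2)
      calc 1/(4*(n:ℝ)) * |((∑ i, V j 1 i ω^2) - n * w j 1)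
            - ((∑ i, V j (-1) i ω^2) - n * w j (-1))|
          ≤ 1/(4*n) * (n * del j 1 + n * del j (-1)) := by
            apply mul_le_mul_of_nonneg_left habs (by positivity)
        _ = (del j 1 + del j (-1)) / 4 := by
            have hgen : ∀ d1 d2 : ℝ, 1/(4*(n:ℝ))*((n:ℝ)*d1 + (n:ℝ)*d2) = (d1+d2)/4 := by
              intro d1 d2
              field_simp
            exact hgen _ _
        _ ≤ 4 * sy * s0 := by
            have hdgen : ∀ θ : ℝ, θ = 1 ∨ θ = -1 → del j θ ≤ 8 * sy * s0 := by
              intro θ hθ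
              rw [hdeldef]
              simp only
              calc 2 * w j θ * s0 = (2 * w j θ) * s0 := by ring
                _ ≤ (8 * sy) * s0 :=
                  mul_le_mul_of_nonneg_right (by linarith [hwub j θ hθ]) hs0.le
                _ = 8 * sy * s0 := by ring
            have hd1 : del j 1 ≤ 8 * sy * s0 := hdgen 1 (Or.inl rfl)
            have hd2 : del j (-1) ≤ 8 * sy * s0 := hdgen (-1) (Or.inr rfl)
            linarith
    have h192 : Real.sqrt (192 * L / n) = 4 * s0 := by
      rw [hs0def, hudef]
      rw [show (192:ℝ) * L / n = 16 * (12 * L / n) by ring,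
        Real.sqrt_mul (by norm_num : (0:ℝ) ≤ 16),
        show Real.sqrt 16 = 4 by
          rw [show (16:ℝ) = 4^2 by norm_num, Real.sqrt_sq (by norm_num : (0:ℝ) ≤ 4)]]
    show |(1 / (n : ℝ)) * (∑ i, x i ω j * y i) - Sig.mulVec β j|
        ≤ (xi Sig S ρ R t + σ) * Real.sqrt (192 * L / n)
    rw [h192]
    calc |(1 / (n : ℝ)) * (∑ i, x i ω j * y i) - Sig.mulVec β j| ≤ 4 * sy * s0 := hbound
      _ = sy * (4 * s0) := by ring
      _ ≤ (xi Sig S ρ R t + σ) * (4 * s0) :=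
          mul_le_mul_of_nonneg_right hsy_le (by positivity)
  -- conclude
  have hrpowinv : (p:ℝ) ^ (-(1:ℝ)) = ((p:ℝ))⁻¹ := Real.rpow_neg_one _
  have hnonneg : 0 ≤ 1 - 2 * (p:ℝ) ^ (-(1:ℝ)) := by
    rw [hrpowinv]
    have : (p:ℝ)⁻¹ ≤ 1/2 := by
      rw [inv_le_comm₀ (by linarith) (by norm_num)]
      simpa using hp2
    linarith
  have hkey : ENNReal.ofReal (1 - 2 * (p:ℝ) ^ (-(1:ℝ))) + P bad ≤ 1 := by
    calc ENNReal.ofReal (1 - 2 * (p:ℝ) ^ (-(1:ℝ))) + P bad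
        ≤ ENNReal.ofReal (1 - 2 * (p:ℝ) ^ (-(1:ℝ)))
          + ENNReal.ofReal (2 * (p:ℝ) ^ (-(1:ℝ))) := add_le_add le_rfl hPbad
      _ = ENNReal.ofReal 1 := by
          rw [← ENNReal.ofReal_add hnonneg (by positivity)]
          congr 1; ring
      _ = 1 := ENNReal.ofReal_one
  calc ENNReal.ofReal (1 - 2 * (p:ℝ) ^ (-(1:ℝ))) ≤ 1 - P bad :=
        ENNReal.le_sub_of_add_le_right (measure_ne_top P bad) hkey
    _ = P badᶜ := (prob_compl_eq_one_sub hbadmeas).symm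
    _ ≤ _ := measure_mono hsubset
end
end

section
/- Let Σ ∈ ℝ^{p×p} be symmetric and S ⊆ {1,…,p} nonempty with S ≠ {1,…,p}. The following are equivalent: (i) for every β ∈ ℝ^p with β ≠ 0 and β_k = 0 for all k ∉ S, one has max_{k∉S} |(Σβ)_k| < max_{j∈S} |(Σβ)_j|; (ii) the principal submatrix Σ_{SS} is invertible and ‖Σ_{S^cS}·Σ_{SS}^{-1}‖_∞ < 1, where ‖·‖_∞ denotes the ℓ_∞→ℓ_∞ operator norm (the maximum absolute row sum). -/
/-!
Write `A = Σ_{SS}`, `B = Σ_{SᶜS}` and `x = β|_S`. Condition (i) says `|(B x)_k| < ‖A x‖_∞` for all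
`x ≠ 0` and `k ∉ S`. As `Sᶜ` is nonempty this forces `A` to be injective, hence invertible, and the
substitution `y = A x` turns it into `|((B A⁻¹) y)_k| < ‖y‖_∞` for all `y ≠ 0`. For a single row `w`
the latter holds iff `∑ⱼ |w j| < 1`: Hölder's inequality gives one direction and the test vector
`y = sign w` the other.
-/

open Matrix

section Row

variable {m : Type*} [Fintype m]

theorem abs_dotProduct_le_sum_abs_mul_norm (w y : m → ℝ) :
    |w ⬝ᵥ y| ≤ (∑ j, |w j|) * ‖y‖ :=
  calc |w ⬝ᵥ y| ≤ ∑ j, |w j * y j| := Finset.abs_sum_le_sum_abs _ _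
    _ = ∑ j, |w j| * ‖y j‖ := by simp only [abs_mul, Real.norm_eq_abs]
    _ ≤ ∑ j, |w j| * ‖y‖ :=
      Finset.sum_le_sum fun j _ => mul_le_mul_of_nonneg_left (norm_le_pi_norm y j) (abs_nonneg _)
    _ = (∑ j, |w j|) * ‖y‖ := (Finset.sum_mul _ _ _).symm

theorem dotProduct_sign_eq_sum_abs (w : m → ℝ) :
    w ⬝ᵥ (fun j => (SignType.sign (w j) : ℝ)) = ∑ j, |w j| :=
  Finset.sum_congr rfl fun j _ => self_mul_sign (w j)

theorem norm_sign_le_one (w : m → ℝ) : ‖fun j => (SignType.sign (w j) : ℝ)‖ ≤ 1 :=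
  (pi_norm_le_iff_of_nonneg zero_le_one).2 fun j => by
    rcases lt_trichotomy (w j) 0 with h | h | h <;> simp [h]

theorem forall_abs_dotProduct_lt_norm_iff (w : m → ℝ) :
    (∀ y : m → ℝ, y ≠ 0 → |w ⬝ᵥ y| < ‖y‖) ↔ ∑ j, |w j| < 1 := by
  refine ⟨fun h => ?_, fun h y hy => ?_⟩
  · by_contra! hge
    set s : m → ℝ := fun j => SignType.sign (w j)
    have hpos : 0 < w ⬝ᵥ s := by rw [dotProduct_sign_eq_sum_abs]; linarith
    have hs : s ≠ 0 := by rintro hs; rw [hs, dotProduct_zero] at hpos; exact hpos.false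
    have hlt := h s hs
    rw [abs_of_pos hpos, dotProduct_sign_eq_sum_abs] at hlt
    linarith [norm_sign_le_one w]
  · calc |w ⬝ᵥ y| ≤ (∑ j, |w j|) * ‖y‖ := abs_dotProduct_le_sum_abs_mul_norm w y
      _ < 1 * ‖y‖ := mul_lt_mul_of_pos_right h (norm_pos_iff.2 hy)
      _ = ‖y‖ := one_mul _

end Row

section Block

variable {m n : Type*} [Fintype m] [DecidableEq m] (A : Matrix m m ℝ) (B : Matrix n m ℝ)

theorem forall_abs_mulVec_lt_norm_mulVec_iff (hA : IsUnit A) :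
    (∀ x : m → ℝ, x ≠ 0 → ∀ k, |(B *ᵥ x) k| < ‖A *ᵥ x‖) ↔ ∀ k, ∑ j, |(B * A⁻¹) k j| < 1 := by
  have hBx : ∀ x, B *ᵥ x = (B * A⁻¹) *ᵥ (A *ᵥ x) := fun x => by
    rw [mulVec_mulVec, Matrix.mul_assoc, nonsing_inv_mul _ ((isUnit_iff_isUnit_det A).1 hA),
      Matrix.mul_one]
  have hinj := mulVec_injective_iff_isUnit.2 hA
  simp_rw [← forall_abs_dotProduct_lt_norm_iff]
  calc (∀ x : m → ℝ, x ≠ 0 → ∀ k, |(B *ᵥ x) k| < ‖A *ᵥ x‖)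
      ↔ ∀ x : m → ℝ, A *ᵥ x ≠ 0 → ∀ k, |((B * A⁻¹) *ᵥ (A *ᵥ x)) k| < ‖A *ᵥ x‖ :=
        forall_congr' fun x => by rw [hBx x, hinj.ne_iff' (mulVec_zero A)]
    _ ↔ ∀ y : m → ℝ, y ≠ 0 → ∀ k, |((B * A⁻¹) *ᵥ y) k| < ‖y‖ :=
        ((mulVec_surjective_iff_isUnit.2 hA).forall
          (p := fun y => y ≠ 0 → ∀ k, |((B * A⁻¹) *ᵥ y) k| < ‖y‖)).symm
    _ ↔ _ := ⟨fun h k y hy => h y hy k, fun h y hy k => h k y hy⟩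

theorem forall_abs_mulVec_lt_norm_mulVec_iff_isUnit [Nonempty n] :
    (∀ x : m → ℝ, x ≠ 0 → ∀ k, |(B *ᵥ x) k| < ‖A *ᵥ x‖) ↔
      IsUnit A ∧ ∀ k, ∑ j, |(B * A⁻¹) k j| < 1 := by
  refine ⟨fun h => ?_, fun ⟨hA, hrows⟩ => (forall_abs_mulVec_lt_norm_mulVec_iff A B hA).2 hrows⟩
  have hA : IsUnit A := by
    rw [isUnit_iff_isUnit_det, isUnit_iff_ne_zero, Ne, ← exists_mulVec_eq_zero_iff]
    rintro ⟨x, hx, hAx⟩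
    have hlt := h x hx (Classical.arbitrary n)
    rw [hAx, norm_zero] at hlt
    exact (abs_nonneg _).not_gt hlt
  exact ⟨hA, (forall_abs_mulVec_lt_norm_mulVec_iff A B hA).1 h⟩

end Block

section Support

variable {ι : Type*} (S : Finset ι)

theorem Finset.forall_supported_restrict_iff {R : Type*} [Zero R] {P : (S → R) → Prop} :
    (∀ β : ι → R, (∀ k ∉ S, β k = 0) → P fun j : S => β j) ↔ ∀ x : S → R, P x := by
  classical
  refine ⟨fun h x => ?_, fun h β _ => h _⟩
  have hx : (fun j : S => if hj : (j : ι) ∈ S then x ⟨j, hj⟩ else 0) = x :=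
    funext fun j => by simp
  exact hx ▸ h (fun i => if hi : i ∈ S then x ⟨i, hi⟩ else 0) fun k hk => dif_neg hk

theorem Finset.restrict_ne_zero_iff {R : Type*} [Zero R] {β : ι → R} (hβ : ∀ k ∉ S, β k = 0) :
    (fun j : S => β j) ≠ 0 ↔ β ≠ 0 := by
  refine not_congr ⟨fun h => funext fun k => ?_, fun h => h ▸ rfl⟩
  by_cases hk : k ∈ S
  · exact congrFun h ⟨k, hk⟩
  · exact hβ k hk

theorem submatrix_val_mulVec_restrict [Fintype ι] {m R : Type*} [NonUnitalNonAssocSemiring R]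
    (M : Matrix ι ι R) (e : m → ι) {β : ι → R} (hβ : ∀ k ∉ S, β k = 0) :
    M.submatrix e ((↑) : S → ι) *ᵥ (fun j : S => β j) = fun i => (M *ᵥ β) (e i) := by
  funext i
  simp only [mulVec, dotProduct, submatrix_apply]
  rw [Finset.sum_coe_sort S fun j => M (e i) j * β j]
  exact Finset.sum_subset S.subset_univ fun j _ hj => by rw [hβ j hj, mul_zero]

theorem Finset.sup'_abs_eq_norm_restrict (hS : S.Nonempty) (v : ι → ℝ) :
    S.sup' hS (fun j => |v j|) = ‖fun j : S => v j‖ := by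
  refine le_antisymm (S.sup'_le hS _ fun j hj => norm_le_pi_norm (fun j : S => v j) ⟨j, hj⟩) ?_
  obtain ⟨j₀, hj₀⟩ := hS
  exact (pi_norm_le_iff_of_nonneg ((abs_nonneg (v j₀)).trans (S.le_sup' (fun j => |v j|) hj₀))).2
    fun j => S.le_sup' (fun j => |v j|) j.2

end Support

theorem maxmax_truthfulness_iff_lasso_incoherence_general {p : ℕ}
    (Sig : Matrix (Fin p) (Fin p) ℝ) (S : Finset (Fin p))
    (hS : S.Nonempty) (hne : S ≠ Finset.univ) :
    (∀ β : Fin p → ℝ, β ≠ 0 → (∀ k ∉ S, β k = 0) →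
        ∀ k ∉ S, |Sig.mulVec β k| < S.sup' hS fun j => |Sig.mulVec β j|) ↔
      (IsUnit (Sig.submatrix ((↑) : {x // x ∈ S} → Fin p) ((↑) : {x // x ∈ S} → Fin p)) ∧
        ∀ k : {x // x ∉ S}, ∑ j : {x // x ∈ S},
          |(Sig.submatrix ((↑) : {x // x ∉ S} → Fin p) ((↑) : {x // x ∈ S} → Fin p) *
            (Sig.submatrix ((↑) : {x // x ∈ S} → Fin p)
              ((↑) : {x // x ∈ S} → Fin p))⁻¹) k j| < 1) := by
  have : Nonempty {x // x ∉ S} := by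
    obtain ⟨k, hk⟩ := not_forall.1 fun h => hne (Finset.eq_univ_of_forall h)
    exact ⟨⟨k, hk⟩⟩
  rw [← forall_abs_mulVec_lt_norm_mulVec_iff_isUnit, ← S.forall_supported_restrict_iff]
  refine forall_congr' fun β => Imp.swap.trans (forall_congr' fun hβ => ?_)
  rw [S.restrict_ne_zero_iff hβ, submatrix_val_mulVec_restrict S Sig _ hβ,
    submatrix_val_mulVec_restrict S Sig _ hβ, S.sup'_abs_eq_norm_restrict hS (Sig *ᵥ β),
    Subtype.forall]

/-- Lemma: the max-max-∞ truthfulness condition is equivalent to the Lasso incoherence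
condition `Σ_{SS}` invertible and `‖Σ_{S^c S} Σ_{SS}⁻¹‖_∞ < 1` (maximum absolute row sum). -/
theorem maxmax_truthfulness_iff_lasso_incoherence {p : ℕ}
    (Sig : Matrix (Fin p) (Fin p) ℝ) (S : Finset (Fin p))
    (hSym : Sig.IsSymm) (hS : S.Nonempty) (hne : S ≠ Finset.univ) :
    (∀ β : Fin p → ℝ, β ≠ 0 → (∀ k ∉ S, β k = 0) →
        ∀ k ∉ S, |Sig.mulVec β k| < S.sup' hS fun j => |Sig.mulVec β j|) ↔
      (IsUnit (Sig.submatrix ((↑) : {x // x ∈ S} → Fin p) ((↑) : {x // x ∈ S} → Fin p)) ∧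
        ∀ k : {x // x ∉ S}, ∑ j : {x // x ∈ S},
          |(Sig.submatrix ((↑) : {x // x ∉ S} → Fin p) ((↑) : {x // x ∈ S} → Fin p) *
            (Sig.submatrix ((↑) : {x // x ∈ S} → Fin p)
              ((↑) : {x // x ∈ S} → Fin p))⁻¹) k j| < 1) :=
  maxmax_truthfulness_iff_lasso_incoherence_general Sig S hS hne
end

section
/- Let Σ ∈ ℝ^{p×p} be symmetric positive semidefinite with unit diagonal, let s ≥ 2 with 2s ≤ p, let R ∈ [1,∞) and δ' ∈ [0,1). If Σ ∈ MRI_S(δ'; R) for every subset S ⊆ {1,…,p} with |S| = s, then for every subset S̃ ⊆ {1,…,p} with |S̃| = 2s one has ‖Σ_{S̃S̃} − I_{2s}‖_op < ((1−δ')/R)·(2s−1)/(s−1), where ‖·‖_op is the ℓ₂ operator norm. In particular, the restricted isometry constant of order 2s satisfies δ_{2s}(Σ) < ((1−δ')/R)·(2s−1)/(s−1). -/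
open Matrix BigOperators

noncomputable section

/-- The `ℓ₂ → ℓ₂` operator norm of a matrix. -/
def l2OpNorm {m : Type*} [Fintype m] [DecidableEq m] (M : Matrix m m ℝ) : ℝ :=
  ‖LinearMap.toContinuousLinearMap (Matrix.toEuclideanLin M)‖

/-! ### Auxiliary lemmas -/

lemma card_filter_mem_powersetCard {α : Type*} [DecidableEq α] (B : Finset α) (k : ℕ)
    (hk : 1 ≤ k) {j : α} (hj : j ∈ B) :
    ((B.powersetCard k).filter (fun A => j ∈ A)).card = (B.card - 1).choose (k - 1) := by
  rw [← Finset.card_erase_of_mem hj, ← Finset.card_powersetCard (k-1) (B.erase j)]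
  refine Finset.card_bij' (fun A _ => A.erase j) (fun C _ => insert j C) ?_ ?_ ?_ ?_
  · intro A hA
    simp only [Finset.mem_filter, Finset.mem_powersetCard] at hA
    simp only [Finset.mem_powersetCard]
    exact ⟨Finset.erase_subset_erase j hA.1.1, by rw [Finset.card_erase_of_mem hA.2, hA.1.2]⟩
  · intro C hC
    simp only [Finset.mem_powersetCard] at hC
    have hjC : j ∉ C := fun h => (Finset.mem_erase.1 (hC.1 h)).1 rfl
    simp only [Finset.mem_filter, Finset.mem_powersetCard]
    refine ⟨⟨Finset.insert_subset hj (hC.1.trans (Finset.erase_subset j B)), ?_⟩,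
      Finset.mem_insert_self j C⟩
    rw [Finset.card_insert_of_notMem hjC, hC.2, Nat.sub_add_cancel hk]
  · intro A hA
    simp only [Finset.mem_filter] at hA
    exact Finset.insert_erase hA.2
  · intro C hC
    simp only [Finset.mem_powersetCard] at hC
    exact Finset.erase_insert (fun h => (Finset.mem_erase.1 (hC.1 h)).1 rfl)

lemma sum_powersetCard_sum {α : Type*} [DecidableEq α] (B : Finset α) (k : ℕ) (hk : 1 ≤ k)
    (f : α → ℝ) :
    ∑ A ∈ B.powersetCard k, ∑ j ∈ A, f j
      = ((B.card - 1).choose (k - 1) : ℝ) * ∑ j ∈ B, f j := by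
  have h1 : ∀ A ∈ B.powersetCard k, ∑ j ∈ A, f j = ∑ j ∈ B, if j ∈ A then f j else 0 := by
    intro A hA
    rw [← Finset.sum_filter]
    have hAB := (Finset.mem_powersetCard.1 hA).1
    congr 1
    rw [Finset.filter_mem_eq_inter, Finset.inter_eq_right.2 hAB]
  rw [Finset.sum_congr rfl h1, Finset.sum_comm]
  have h2 : ∀ j ∈ B, (∑ A ∈ B.powersetCard k, if j ∈ A then f j else 0)
      = ((B.card - 1).choose (k - 1) : ℝ) * f j := by
    intro j hj
    rw [← Finset.sum_filter, Finset.sum_const, card_filter_mem_powersetCard B k hk hj,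
      nsmul_eq_mul]
  rw [Finset.sum_congr rfl h2, ← Finset.mul_sum]

lemma avg_bound {α : Type*} [DecidableEq α] (B : Finset α) (k : ℕ) (hk : 1 ≤ k)
    (hkB : k ≤ B.card) (f : α → ℝ) (c : ℝ)
    (h : ∀ A ⊆ B, A.card = k → ∑ j ∈ A, f j < c) :
    (k : ℝ) * ∑ j ∈ B, f j < c * B.card := by
  have hP : (B.powersetCard k).Nonempty := Finset.powersetCard_nonempty.2 hkB
  have hsum : ∑ A ∈ B.powersetCard k, ∑ j ∈ A, f j < ∑ _A ∈ B.powersetCard k, c := by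
    apply Finset.sum_lt_sum_of_nonempty hP
    intro A hA
    obtain ⟨hAB, hAc⟩ := Finset.mem_powersetCard.1 hA
    exact h A hAB hAc
  rw [sum_powersetCard_sum B k hk f, Finset.sum_const, Finset.card_powersetCard,
    nsmul_eq_mul] at hsum
  set n := B.card with hn
  set D : ℕ := (n-1).choose (k-1) with hD
  set E : ℕ := n.choose k with hE
  have hid : n * D = E * k := by
    have h0 := Nat.add_one_mul_choose_eq (n-1) (k-1)
    have e1 : (n-1) + 1 = n := by omega
    have e2 : (k-1) + 1 = k := by omega
    rwa [e1, e2] at h0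
  have hidR : (n : ℝ) * D = (E : ℝ) * k := by exact_mod_cast congrArg (Nat.cast (R := ℝ)) hid
  have hD0 : (0:ℝ) < D := by
    have : 0 < D := Nat.choose_pos (Nat.sub_le_sub_right hkB 1)
    exact_mod_cast this
  have hk0 : (0:ℝ) < k := by exact_mod_cast hk
  set S := ∑ j ∈ B, f j
  have h2 : (D:ℝ) * ((k:ℝ) * S) < (D:ℝ) * (c * n) := by
    calc (D:ℝ) * ((k:ℝ) * S) = (k:ℝ) * ((D:ℝ) * S) := by ring
    _ < (k:ℝ) * ((E:ℝ) * c) := by exact mul_lt_mul_of_pos_left hsum hk0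
    _ = (D:ℝ) * (c * n) := by linear_combination (-c) * hidR
  exact lt_of_mul_lt_mul_left h2 hD0.le

lemma l2OpNorm_le_of_rowsums {n : Type*} [Fintype n] [DecidableEq n] (M : Matrix n n ℝ)
    (C : ℝ) (hC : 0 ≤ C) (hrow : ∀ i, ∑ j, |M i j| ≤ C) (hcol : ∀ j, ∑ i, |M i j| ≤ C) :
    l2OpNorm M ≤ C := by
  rw [l2OpNorm]
  apply ContinuousLinearMap.opNorm_le_bound _ hC
  intro x
  rw [EuclideanSpace.norm_eq, EuclideanSpace.norm_eq]
  have key : ∑ i, ‖(LinearMap.toContinuousLinearMap (Matrix.toEuclideanLin M)) x i‖ ^ 2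
      ≤ C ^ 2 * ∑ j, ‖x j‖ ^ 2 := by
    have step1 : ∀ i, ‖(LinearMap.toContinuousLinearMap (Matrix.toEuclideanLin M)) x i‖ ^ 2
        ≤ C * ∑ j, |M i j| * (x j) ^ 2 := by
      intro i
      have happ : (LinearMap.toContinuousLinearMap (Matrix.toEuclideanLin M)) x i
          = ∑ j, M i j * x j := by
        simp [Matrix.toEuclideanLin_apply, Matrix.mulVec, dotProduct]
      rw [happ, Real.norm_eq_abs, sq_abs]
      have h1 : (∑ j, M i j * x j) ^ 2 ≤ (∑ j, |M i j| * |x j|) ^ 2 := by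
        rw [← sq_abs (∑ j, M i j * x j)]
        apply pow_le_pow_left₀ (abs_nonneg _)
        refine (Finset.abs_sum_le_sum_abs _ _).trans ?_
        apply le_of_eq
        exact Finset.sum_congr rfl fun j _ => abs_mul _ _
      have h2 : (∑ j, |M i j| * |x j|) ^ 2
          ≤ (∑ j, |M i j|) * ∑ j, |M i j| * (x j) ^ 2 := by
        have hcs := Finset.sum_mul_sq_le_sq_mul_sq Finset.univ
          (fun j => Real.sqrt |M i j|) (fun j => Real.sqrt |M i j| * |x j|)
        calc (∑ j, |M i j| * |x j|) ^ 2
            = (∑ j, Real.sqrt |M i j| * (Real.sqrt |M i j| * |x j|)) ^ 2 := by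
              congr 1
              refine Finset.sum_congr rfl fun j _ => ?_
              rw [← mul_assoc, Real.mul_self_sqrt (abs_nonneg _)]
          _ ≤ (∑ j, Real.sqrt |M i j| ^ 2) * ∑ j, (Real.sqrt |M i j| * |x j|) ^ 2 := hcs
          _ = (∑ j, |M i j|) * ∑ j, |M i j| * (x j) ^ 2 := by
              congr 1
              · exact Finset.sum_congr rfl fun j _ => Real.sq_sqrt (abs_nonneg _)
              · refine Finset.sum_congr rfl fun j _ => ?_
                rw [mul_pow, Real.sq_sqrt (abs_nonneg _), sq_abs]
      have h3 : (∑ j, |M i j|) * (∑ j, |M i j| * (x j) ^ 2)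
          ≤ C * ∑ j, |M i j| * (x j) ^ 2 := by
        apply mul_le_mul_of_nonneg_right (hrow i)
        exact Finset.sum_nonneg fun j _ => mul_nonneg (abs_nonneg _) (sq_nonneg _)
      linarith
    calc ∑ i, ‖(LinearMap.toContinuousLinearMap (Matrix.toEuclideanLin M)) x i‖ ^ 2
        ≤ ∑ i, C * ∑ j, |M i j| * (x j) ^ 2 := Finset.sum_le_sum fun i _ => step1 i
      _ = C * ∑ j, (∑ i, |M i j|) * (x j) ^ 2 := by
          rw [← Finset.mul_sum, Finset.sum_comm]
          congr 1
          exact Finset.sum_congr rfl fun j _ => (Finset.sum_mul _ _ _).symm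
      _ ≤ C * ∑ j, C * (x j) ^ 2 := by
          apply mul_le_mul_of_nonneg_left _ hC
          exact Finset.sum_le_sum fun j _ =>
            mul_le_mul_of_nonneg_right (hcol j) (sq_nonneg _)
      _ = C ^ 2 * ∑ j, ‖x j‖ ^ 2 := by
          simp only [Real.norm_eq_abs, sq_abs, ← Finset.mul_sum]
          ring
  calc Real.sqrt (∑ i, ‖(LinearMap.toContinuousLinearMap (Matrix.toEuclideanLin M)) x i‖ ^ 2)
      ≤ Real.sqrt (C ^ 2 * ∑ j, ‖x j‖ ^ 2) := Real.sqrt_le_sqrt key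
    _ = C * Real.sqrt (∑ j, ‖x j‖ ^ 2) := by
        rw [Real.sqrt_mul (sq_nonneg _), Real.sqrt_sq hC]

lemma mri_small_row {p : ℕ} (Sig : Matrix (Fin p) (Fin p) ℝ) (hSym : Sig.IsSymm)
    (hdiag : ∀ i, Sig i i = 1) (s : ℕ) (hs : 2 ≤ s) (hsp : 2 * s ≤ p) (R δ' : ℝ)
    (hR : 1 ≤ R)
    (hMRI : ∀ S : Finset (Fin p), S.card = s → MRI Sig S δ' R)
    (i : Fin p) (A : Finset (Fin p)) (hiA : i ∉ A) (hA : A.card = s - 1) :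
    ∑ j ∈ A, |Sig i j| < (1 - δ') / R := by
  set S : Finset (Fin p) := insert i A with hS
  have hScard : S.card = s := by
    rw [hS, Finset.card_insert_of_notMem hiA, hA]; omega
  have hcompl : Sᶜ.Nonempty := by
    rw [← Finset.card_pos, Finset.card_compl, hScard]
    simp only [Fintype.card_fin]
    omega
  obtain ⟨k, hk⟩ := hcompl
  have hkS : k ∉ S := Finset.mem_compl.1 hk
  obtain ⟨h1, h2⟩ := hMRI S hScard i (Finset.mem_insert_self i A) k hkS
  rw [hdiag i] at h1 h2
  set P := ∑ j' ∈ S, |Sig j' i + Sig j' k| with hP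
  set Mm := ∑ j' ∈ S, |Sig j' i - Sig j' k| with hMm
  set Sg := ∑ j ∈ A, |Sig i j| with hSg
  have key : 2 + 2 * Sg ≤ P + Mm := by
    have hterm : ∀ j' ∈ S, 2 * |Sig j' i| ≤ |Sig j' i + Sig j' k| + |Sig j' i - Sig j' k| := by
      intro j' _
      have h2a : |2 * Sig j' i| ≤ |Sig j' i + Sig j' k| + |Sig j' i - Sig j' k| := by
        calc |2 * Sig j' i| = |(Sig j' i + Sig j' k) + (Sig j' i - Sig j' k)| := by ring_nf
          _ ≤ _ := abs_add_le _ _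
      rwa [abs_mul, abs_two] at h2a
    have hsum : ∑ j' ∈ S, 2 * |Sig j' i| ≤ P + Mm := by
      rw [hP, hMm, ← Finset.sum_add_distrib]
      exact Finset.sum_le_sum hterm
    have heq : ∑ j' ∈ A, 2 * |Sig j' i| = 2 * Sg := by
      rw [hSg, Finset.mul_sum]
      exact Finset.sum_congr rfl fun j' _ => by rw [hSym.apply i j']
    rw [hS, Finset.sum_insert hiA, hdiag i, abs_one, heq] at hsum
    linarith
  have h1R : (0:ℝ) < 1 + R := by linarith
  have hR0 : (0:ℝ) < R := by linarith
  have hfrac : 0 < R / (1 + R) := div_pos hR0 h1R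
  have hq : R / (1 + R) * (2 + 2 * Sg) + 2 * (δ' / (1 + R)) < 2 := by
    have hmono := mul_le_mul_of_nonneg_left key hfrac.le
    have hexp := mul_add (R / (1 + R)) P Mm
    linarith
  have e : (R / (1 + R) * (2 + 2 * Sg) + 2 * (δ' / (1 + R))) * (1 + R)
      = R * (2 + 2 * Sg) + 2 * δ' := by
    field_simp
  have hmul := mul_lt_mul_of_pos_right hq h1R
  rw [e] at hmul
  rw [lt_div_iff₀ hR0]
  linarith

/-- Proposition (MRI implies RIP): if MR incoherence holds for all supports of size `s`,
then `‖Σ_{S̃S̃} - I‖_op < ((1-δ')/R)·(2s-1)/(s-1)` for all `S̃` of size `2s`; in particular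
the restricted isometry constant of order `2s` satisfies the same bound. -/
theorem mri_implies_rip {p : ℕ} (Sig : Matrix (Fin p) (Fin p) ℝ)
    (hSym : Sig.IsSymm) (hPSD : Sig.PosSemidef) (hdiag : ∀ i, Sig i i = 1)
    (s : ℕ) (hs : 2 ≤ s) (hsp : 2 * s ≤ p) (R δ' : ℝ) (hR : 1 ≤ R)
    (hδ'0 : 0 ≤ δ') (hδ'1 : δ' < 1)
    (hMRI : ∀ S : Finset (Fin p), S.card = s → MRI Sig S δ' R) :
    (∀ T : Finset (Fin p), T.card = 2 * s →
      l2OpNorm ((Sig.submatrix ((↑) : {x // x ∈ T} → Fin p)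
          ((↑) : {x // x ∈ T} → Fin p)) - 1) <
        ((1 - δ') / R) * ((2 * (s : ℝ) - 1) / ((s : ℝ) - 1))) ∧
    (∀ T : Finset (Fin p), T.card ≤ 2 * s →
      l2OpNorm ((Sig.submatrix ((↑) : {x // x ∈ T} → Fin p)
          ((↑) : {x // x ∈ T} → Fin p)) - 1) <
        ((1 - δ') / R) * ((2 * (s : ℝ) - 1) / ((s : ℝ) - 1))) := by
  have hR0 : (0:ℝ) < R := by linarith
  have hs2R : (2:ℝ) ≤ (s:ℝ) := by exact_mod_cast hs
  set c : ℝ := (1 - δ') / R with hc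
  set b : ℝ := c * ((2 * (s : ℝ) - 1) / ((s : ℝ) - 1)) with hb
  have hcpos : 0 < c := div_pos (by linarith) hR0
  have hbpos : 0 < b := mul_pos hcpos (div_pos (by linarith) (by linarith))
  -- row bound for arbitrary sets of size at most 2s-1
  have rowD : ∀ (i : Fin p) (B : Finset (Fin p)), i ∉ B → B.card ≤ 2 * s - 1 →
      ∑ j ∈ B, |Sig i j| < b := by
    intro i B hiB hBcard
    have hBsub : B ⊆ Finset.univ.erase i := by
      intro x hx
      exact Finset.mem_erase.2 ⟨fun h => hiB (h ▸ hx), Finset.mem_univ x⟩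
    have herase : (Finset.univ.erase i).card = p - 1 := by
      rw [Finset.card_erase_of_mem (Finset.mem_univ i), Finset.card_univ, Fintype.card_fin]
    obtain ⟨B', hBB', hB'sub, hB'card⟩ :=
      Finset.exists_subsuperset_card_eq hBsub hBcard (by omega)
    have hle : ∑ j ∈ B, |Sig i j| ≤ ∑ j ∈ B', |Sig i j| :=
      Finset.sum_le_sum_of_subset_of_nonneg hBB' (fun j _ _ => abs_nonneg _)
    have havg : ((s - 1 : ℕ) : ℝ) * ∑ j ∈ B', |Sig i j| < c * (B'.card : ℝ) := by
      apply avg_bound B' (s - 1) (by omega) (by omega) _ c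
      intro A hAB' hAcard
      have hiA : i ∉ A := fun h =>
        (Finset.mem_erase.1 (hB'sub (hAB' h))).1 rfl
      exact mri_small_row Sig hSym hdiag s hs hsp R δ' hR hMRI i A hiA hAcard
    rw [hB'card] at havg
    have ck : ((s - 1 : ℕ) : ℝ) = (s : ℝ) - 1 := by
      rw [Nat.cast_sub (by omega)]; norm_num
    have cn : ((2 * s - 1 : ℕ) : ℝ) = 2 * (s : ℝ) - 1 := by
      rw [Nat.cast_sub (by omega)]; push_cast; ring
    rw [ck, cn] at havg
    have hs1 : (0:ℝ) < (s : ℝ) - 1 := by linarith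
    have hfinal : ∑ j ∈ B', |Sig i j| < b := by
      rw [hb, mul_div_assoc'] at *
      rw [lt_div_iff₀ hs1]
      linarith
    linarith
  -- main claim for all T with card ≤ 2s
  have key : ∀ T : Finset (Fin p), T.card ≤ 2 * s →
      l2OpNorm ((Sig.submatrix ((↑) : {x // x ∈ T} → Fin p)
          ((↑) : {x // x ∈ T} → Fin p)) - 1) < b := by
    intro T hT
    set M : Matrix {x // x ∈ T} {x // x ∈ T} ℝ :=
      (Sig.submatrix ((↑) : {x // x ∈ T} → Fin p) ((↑) : {x // x ∈ T} → Fin p)) - 1 with hM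
    have hMsymm : ∀ a b : {x // x ∈ T}, M a b = M b a := by
      intro a b'
      simp only [hM, Matrix.sub_apply, Matrix.submatrix_apply, Matrix.one_apply]
      rw [hSym.apply]
      by_cases h : a = b'
      · rw [h]
      · rw [if_neg h, if_neg (fun h' => h h'.symm)]
    have frow : ∀ i : {x // x ∈ T}, ∑ j, |M i j| = ∑ j ∈ T.erase ↑i, |Sig ↑i j| := by
      intro i
      have e1 : ∀ j : {x // x ∈ T}, |M i j|
          = |Sig ↑i ↑j - if (↑i : Fin p) = ↑j then 1 else 0| := by
        intro j
        simp only [hM, Matrix.sub_apply, Matrix.submatrix_apply, Matrix.one_apply]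
        congr 2
        simp only [Subtype.ext_iff]
      calc ∑ j, |M i j|
          = ∑ j : {x // x ∈ T}, |Sig ↑i ↑j - if (↑i : Fin p) = ↑j then 1 else 0| :=
            Finset.sum_congr rfl fun j _ => e1 j
        _ = ∑ j ∈ T, |Sig ↑i j - if (↑i : Fin p) = j then 1 else 0| :=
            T.sum_coe_sort (fun j => |Sig ↑i j - if (↑i : Fin p) = j then 1 else 0|)
        _ = ∑ j ∈ T.erase ↑i, |Sig ↑i j| := by
            rw [← Finset.add_sum_erase T _ i.2, if_pos rfl, hdiag, sub_self, abs_zero,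
              zero_add]
            exact Finset.sum_congr rfl fun j hj => by
              rw [if_neg (fun h => (Finset.mem_erase.1 hj).1 h.symm), sub_zero]
    have hrowlt : ∀ i : {x // x ∈ T}, ∑ j, |M i j| < b := by
      intro i
      rw [frow i]
      apply rowD ↑i (T.erase ↑i) (Finset.notMem_erase _ _)
      rw [Finset.card_erase_of_mem i.2]
      omega
    rcases T.eq_empty_or_nonempty with rfl | ⟨t, ht⟩
    · haveI : IsEmpty {x // x ∈ (∅ : Finset (Fin p))} :=
        ⟨fun x => (Finset.notMem_empty _ x.2)⟩
      have h0 : l2OpNorm M ≤ 0 :=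
        l2OpNorm_le_of_rowsums M 0 le_rfl (fun i => isEmptyElim i) (fun j => isEmptyElim j)
      exact lt_of_le_of_lt h0 hbpos
    · haveI : Nonempty {x // x ∈ T} := ⟨⟨t, ht⟩⟩
      obtain ⟨i0, _, hmax⟩ := Finset.exists_max_image Finset.univ
        (fun i : {x // x ∈ T} => ∑ j, |M i j|) Finset.univ_nonempty
      set C := ∑ j, |M i0 j| with hC
      have hC0 : 0 ≤ C := Finset.sum_nonneg fun j _ => abs_nonneg _
      have hrow : ∀ i, ∑ j, |M i j| ≤ C := fun i => hmax i (Finset.mem_univ i)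
      have hcol : ∀ j, ∑ i, |M i j| ≤ C := by
        intro j
        have : ∑ i, |M i j| = ∑ i, |M j i| :=
          Finset.sum_congr rfl fun i _ => by rw [hMsymm i j]
        rw [this]
        exact hrow j
      exact lt_of_le_of_lt (l2OpNorm_le_of_rowsums M C hC0 hrow hcol) (hrowlt i0)
  exact ⟨fun T hT => key T hT.le, key⟩
end
end

section
/- Let Σ ∈ ℝ^{p×p} be symmetric positive semidefinite with unit diagonal, let s ≥ 1, R ∈ [1,∞) and δ' ∈ [0,1). Define the pairwise incoherence δ_PW(Σ) := max_{i≠j} |Σ_{ij}|. If δ_PW(Σ) < (1−δ')/(2R(s−1)+1), then Σ ∈ MRI_S(δ'; R) for every nonempty subset S ⊆ {1,…,p} with |S| ≤ s. -/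
/-! The diagonal term of `∑_{j' ∈ S} |Σ_{j'j} ± Σ_{j'k}|` is `1 ± Σ_{jk}`, and each of the other
at most `s - 1` terms is below `2 δ_PW`. The threshold on `δ_PW` is exactly what makes
`R (1 ± Σ_{jk}) + 2R(s-1) δ_PW + δ'` fall below `(1 + R)(1 ± Σ_{jk})`, using `|Σ_{jk}| < δ_PW`. -/

open Matrix BigOperators

noncomputable section

section

variable {ι : Type*} [DecidableEq ι]

theorem sum_abs_add_le_of_erase {S : Finset ι} {j : ι} (hj : j ∈ S) {u v : ι → ℝ} {c : ℝ}
    (hj_nonneg : 0 ≤ u j + v j) (hoff : ∀ x ∈ S.erase j, |u x| ≤ c ∧ |v x| ≤ c) :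
    ∑ x ∈ S, |u x + v x| ≤ u j + v j + ((S.card : ℝ) - 1) * (2 * c) := by
  rw [← Finset.add_sum_erase S _ hj, abs_of_nonneg hj_nonneg]
  have hterm : ∀ x ∈ S.erase j, |u x + v x| ≤ 2 * c := fun x hx =>
    (abs_add_le _ _).trans (by linarith [hoff x hx])
  have hsum := Finset.sum_le_card_nsmul (S.erase j) _ _ hterm
  rw [nsmul_eq_mul, Finset.card_erase_of_mem hj,
    Nat.cast_pred (Finset.card_pos.mpr ⟨j, hj⟩)] at hsum
  linarith

theorem weighted_sum_abs_add_lt {S : Finset ι} {j : ι} (hj : j ∈ S) {u v : ι → ℝ}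
    {R δ' c n : ℝ} (hR : 0 ≤ R) (hS : (S.card : ℝ) ≤ n) (hc : 2 * R * (n - 1) * c + c + δ' ≤ 1)
    (hc_le_one : c ≤ 1) (huj : u j = 1) (hvj : |v j| < c)
    (hoff : ∀ x ∈ S.erase j, |u x| ≤ c ∧ |v x| ≤ c) :
    R / (1 + R) * ∑ x ∈ S, |u x + v x| + δ' / (1 + R) < u j + v j := by
  have hvj_lo := (abs_lt.mp hvj).1
  have hsum := sum_abs_add_le_of_erase hj (by linarith) hoff
  have hc0 : 0 ≤ c := (abs_nonneg _).trans hvj.le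
  have hoff_sum : R * (((S.card : ℝ) - 1) * (2 * c)) ≤ 2 * R * (n - 1) * c := by
    have := mul_le_mul_of_nonneg_left (sub_le_sub_right hS 1) (mul_nonneg hR hc0)
    linarith
  have hkey : R * ∑ x ∈ S, |u x + v x| + δ' < (u j + v j) * (1 + R) := by
    linarith [mul_le_mul_of_nonneg_left hsum hR]
  rw [div_mul_eq_mul_div, ← add_div, div_lt_iff₀ (by linarith)]
  exact hkey

end

theorem pwi_implies_mri_general {p : ℕ} (Sig : Matrix (Fin p) (Fin p) ℝ)
    (hdiag : ∀ i, Sig i i = 1)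
    (s : ℕ) (R δ' : ℝ) (hR : 1 ≤ R) (hδ'0 : 0 ≤ δ')
    (hPW : ∀ i j : Fin p, i ≠ j →
      |Sig i j| < (1 - δ') / (2 * R * ((s : ℝ) - 1) + 1)) :
    ∀ S : Finset (Fin p), S.Nonempty → S.card ≤ s → MRI Sig S δ' R := by
  intro S _ hS j hj k hk
  set c := (1 - δ') / (2 * R * ((s : ℝ) - 1) + 1) with hc_def
  have hs : (1 : ℝ) ≤ s := by exact_mod_cast (Finset.card_pos.mpr ⟨j, hj⟩).trans_le hS
  have hD : 1 ≤ 2 * R * ((s : ℝ) - 1) + 1 := by nlinarith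
  have hc : 2 * R * ((s : ℝ) - 1) * c + c + δ' ≤ 1 := by
    rw [hc_def]; field_simp; linarith
  have hc_le_one : c ≤ 1 := by rw [hc_def, div_le_one (by linarith)]; linarith
  have hSk : ∀ x ∈ S, x ≠ k := fun x hx h => hk (h ▸ hx)
  have hoff : ∀ x ∈ S.erase j, |Sig x j| ≤ c ∧ |Sig x k| ≤ c := fun x hx =>
    ⟨(hPW x j (Finset.ne_of_mem_erase hx)).le, (hPW x k (hSk x (Finset.mem_of_mem_erase hx))).le⟩
  have hjk := hPW j k (hSk j hj)
  have hS' : (S.card : ℝ) ≤ s := by exact_mod_cast hS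
  refine ⟨weighted_sum_abs_add_lt hj (by linarith) hS' hc hc_le_one (hdiag j) hjk hoff, ?_⟩
  simp only [sub_eq_add_neg]
  exact weighted_sum_abs_add_lt (v := fun x => -Sig x k) hj (by linarith) hS' hc hc_le_one
    (hdiag j) (by rwa [abs_neg]) (by simpa only [abs_neg] using hoff)

/-- Proposition (pairwise incoherence implies MRI): if
`δ_PW(Σ) = max_{i ≠ j} |Σ_{ij}| < (1-δ')/(2R(s-1)+1)`, then MR incoherence with
parameters `δ'` and `R` holds for every nonempty support of size at most `s`. -/
theorem pwi_implies_mri {p : ℕ} (Sig : Matrix (Fin p) (Fin p) ℝ)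
    (hSym : Sig.IsSymm) (hPSD : Sig.PosSemidef) (hdiag : ∀ i, Sig i i = 1)
    (s : ℕ) (hs : 1 ≤ s) (R δ' : ℝ) (hR : 1 ≤ R) (hδ'0 : 0 ≤ δ') (hδ'1 : δ' < 1)
    (hPW : ∀ i j : Fin p, i ≠ j →
      |Sig i j| < (1 - δ') / (2 * R * ((s : ℝ) - 1) + 1)) :
    ∀ S : Finset (Fin p), S.Nonempty → S.card ≤ s → MRI Sig S δ' R :=
  pwi_implies_mri_general Sig hdiag s R δ' hR hδ'0 hPW
end
end

section
/- Let Σ ∈ ℝ^{p×p} be symmetric positive semidefinite, and let S ⊆ {1,…,p} be nonempty with S ≠ {1,…,p} and Σ_{SS} invertible. Suppose that for every β* ∈ ℝ^p with β*_k = 0 for all k ∉ S and with β*_j ∈ {−t, t} for all j ∈ S for some t > 0, there exist λ > 0 and a minimizer β̂ of the function β ↦ (1/2)·βᵀΣβ − βᵀΣβ* + λ‖β‖₁ over ℝ^p such that β̂_k = 0 for all k ∉ S, β̂_j ≠ 0 for all j ∈ S, and sign(β̂_j) = sign(β*_j) for all j ∈ S. Then ‖Σ_{S^cS}·Σ_{SS}^{-1}‖_∞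 ≤ 1, where ‖·‖_∞ denotes the ℓ_∞→ℓ_∞ operator norm. -/
/-!
Take for `β*` on `S` the sign pattern `ε` of row `k` of `M = Σ_{S^cS} Σ_{SS}⁻¹`. Minimality of
`β̂` along each coordinate axis gives the KKT conditions: with `d = β̂ - β*`, which is supported
on `S`, `(Σ d)_j = -λ sign β̂_j = -λ ε_j` for `j ∈ S` and `|(Σ d)_k| ≤ λ`. The first says
`d_S = -λ Σ_{SS}⁻¹ ε`, so `(Σ d)_k = -λ (M ε)_k = -λ ∑_j |M_kj|`, and the second gives
`∑_j |M_kj| ≤ 1`.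
-/

open Matrix BigOperators

noncomputable section

def lassoObj {p : ℕ} (Sig : Matrix (Fin p) (Fin p) ℝ) (βs : Fin p → ℝ) (lam : ℝ)
    (β : Fin p → ℝ) : ℝ :=
  (1 / 2) * (β ⬝ᵥ Sig.mulVec β) - β ⬝ᵥ Sig.mulVec βs + lam * ∑ i, |β i|

open Filter Topology

theorem nonneg_of_eventually_nonneg_quadratic {a b : ℝ}
    (h : ∀ᶠ s in 𝓝[>] (0 : ℝ), 0 ≤ a * s ^ 2 + b * s) : 0 ≤ b := by
  have hlim : Tendsto (fun s : ℝ => a * s + b) (𝓝[>] 0) (𝓝 b) := by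
    have : Continuous fun s : ℝ => a * s + b := by fun_prop
    simpa using (this.continuousWithinAt (s := Set.Ioi 0) (x := 0)).tendsto
  refine ge_of_tendsto hlim ?_
  filter_upwards [h, self_mem_nhdsWithin] with s hs (hpos : 0 < s)
  nlinarith

theorem abs_le_of_forall_nonneg_add_abs {a b c : ℝ}
    (h : ∀ s, 0 ≤ a * s ^ 2 + b * s + c * |s|) : |b| ≤ c := by
  have hright : 0 ≤ b + c := nonneg_of_eventually_nonneg_quadratic <| by
    filter_upwards [self_mem_nhdsWithin] with s (hs : 0 < s)
    simpa [abs_of_pos hs, add_mul, mul_add, add_assoc] using h s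
  have hleft : 0 ≤ -b + c := nonneg_of_eventually_nonneg_quadratic <| by
    filter_upwards [self_mem_nhdsWithin] with s (hs : 0 < s)
    have := h (-s)
    rw [abs_neg, abs_of_pos hs] at this
    linarith
  exact abs_le'.2 ⟨by linarith, by linarith⟩

theorem hasDerivAt_abs_const_add {x : ℝ} (hx : x ≠ 0) :
    HasDerivAt (fun s => |x + s|) (Real.sign x) 0 := by
  rcases hx.lt_or_gt with hneg | hpos
  · rw [Real.sign_of_neg hneg]
    exact (hasDerivAt_abs_neg (by simpa using hneg)).comp_const_add x 0
  · rw [Real.sign_of_pos hpos]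
    exact (hasDerivAt_abs_pos (by simpa using hpos)).comp_const_add x 0

theorem eq_neg_mul_sign_of_forall_nonneg {a b c x : ℝ} (hx : x ≠ 0)
    (h : ∀ s, 0 ≤ a * s ^ 2 + b * s + c * (|x + s| - |x|)) : b = -c * Real.sign x := by
  have hmin : IsLocalMin (fun s => a * s ^ 2 + b * s + c * |x + s|) 0 :=
    Eventually.of_forall fun s => by
      simp only [add_zero, mul_zero, zero_pow two_ne_zero]
      linarith [h s]
  have hderiv := hmin.hasDerivAt_eq_zero ((((hasDerivAt_pow 2 (0 : ℝ)).const_mul a).add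
    ((hasDerivAt_id (0 : ℝ)).const_mul b)).add ((hasDerivAt_abs_const_add hx).const_mul c))
  simp only [Nat.cast_ofNat, Nat.add_one_sub_one, pow_one, mul_zero, mul_one, zero_add] at hderiv
  linarith

theorem sum_abs_add_single {n : Type*} [Fintype n] [DecidableEq n] (β : n → ℝ) (i : n) (s : ℝ) :
    ∑ j, |(β + Pi.single i s : n → ℝ) j| = ∑ j, |β j| + (|β i + s| - |β i|) := by
  rw [← sub_eq_iff_eq_add', ← Finset.sum_sub_distrib, Finset.sum_eq_single i]
  · simp
  · intro j _ hj
    simp [hj]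
  · simp

theorem lassoObj_add_single {p : ℕ} {Sig : Matrix (Fin p) (Fin p) ℝ} (hSym : Sig.IsSymm)
    (βs : Fin p → ℝ) (lam : ℝ) (β : Fin p → ℝ) (i : Fin p) (s : ℝ) :
    lassoObj Sig βs lam (β + Pi.single i s) = lassoObj Sig βs lam β +
      (Sig i i / 2 * s ^ 2 + (Sig *ᵥ (β - βs)) i * s + lam * (|β i + s| - |β i|)) := by
  have hcross : β ⬝ᵥ Sig *ᵥ Pi.single i s = (Sig *ᵥ β) i * s := by
    rw [dotProduct_mulVec, ← mulVec_transpose, hSym.eq, dotProduct_single]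
  have hquad : Pi.single i s ⬝ᵥ Sig *ᵥ Pi.single i s = Sig i i * s ^ 2 := by
    simp [mulVec_single, pow_two, mul_comm, mul_left_comm]
  rw [lassoObj, lassoObj, sum_abs_add_single]
  simp only [add_dotProduct, mulVec_add, dotProduct_add, hquad, single_dotProduct, hcross,
    mulVec_sub, Pi.sub_apply]
  ring

theorem lassoObj_single_increment_nonneg {p : ℕ} {Sig : Matrix (Fin p) (Fin p) ℝ}
    (hSym : Sig.IsSymm) {βs : Fin p → ℝ} {lam : ℝ} {βh : Fin p → ℝ}
    (hmin : ∀ γ, lassoObj Sig βs lam βh ≤ lassoObj Sig βs lam γ) (i : Fin p) (s : ℝ) :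
    0 ≤ Sig i i / 2 * s ^ 2 + (Sig *ᵥ (βh - βs)) i * s + lam * (|βh i + s| - |βh i|) := by
  have := hmin (βh + Pi.single i s)
  rw [lassoObj_add_single hSym] at this
  linarith

theorem lasso_grad_eq_of_ne_zero {p : ℕ} {Sig : Matrix (Fin p) (Fin p) ℝ}
    (hSym : Sig.IsSymm) {βs : Fin p → ℝ} {lam : ℝ} {βh : Fin p → ℝ}
    (hmin : ∀ γ, lassoObj Sig βs lam βh ≤ lassoObj Sig βs lam γ) {i : Fin p} (hi : βh i ≠ 0) :
    (Sig *ᵥ (βh - βs)) i = -lam * Real.sign (βh i) :=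
  eq_neg_mul_sign_of_forall_nonneg hi (lassoObj_single_increment_nonneg hSym hmin i)

theorem abs_lasso_grad_le_of_eq_zero {p : ℕ} {Sig : Matrix (Fin p) (Fin p) ℝ}
    (hSym : Sig.IsSymm) {βs : Fin p → ℝ} {lam : ℝ} {βh : Fin p → ℝ}
    (hmin : ∀ γ, lassoObj Sig βs lam βh ≤ lassoObj Sig βs lam γ) {i : Fin p} (hi : βh i = 0) :
    |(Sig *ᵥ (βh - βs)) i| ≤ lam :=
  abs_le_of_forall_nonneg_add_abs fun s => by
    simpa [hi] using lassoObj_single_increment_nonneg hSym hmin i s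

theorem mulVec_apply_eq_submatrix_mulVec {l m n α : Type*} [Fintype n]
    [NonUnitalNonAssocSemiring α] (M : Matrix m n α) (r : l → m) {S : Finset n} {d : n → α}
    (hd : ∀ j ∉ S, d j = 0) (i : l) :
    (M *ᵥ d) (r i) = (M.submatrix r ((↑) : S → n) *ᵥ fun j => d j) i := by
  simp only [mulVec, dotProduct, submatrix_apply]
  rw [Finset.sum_coe_sort S fun j => M (r i) j * d j]
  exact (Finset.sum_subset S.subset_univ fun j _ hj => by simp [hd j hj]).symm

theorem abs_mul_inv_mulVec_le_one {m n : Type*} [Fintype n] [DecidableEq n]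
    {A : Matrix n n ℝ} (hA : IsUnit A) (B : Matrix m n ℝ) {ε z : n → ℝ} {lam : ℝ}
    (hlam : 0 < lam) (hz : A *ᵥ z = -lam • ε) {k : m} (hk : |(B *ᵥ z) k| ≤ lam) :
    |((B * A⁻¹) *ᵥ ε) k| ≤ 1 := by
  have hz' : z = -lam • (A⁻¹ *ᵥ ε) := by
    rw [← mulVec_smul, ← hz, mulVec_mulVec, nonsing_inv_mul _ ((isUnit_iff_isUnit_det A).1 hA),
      one_mulVec]
  rw [hz', mulVec_smul, mulVec_mulVec, Pi.smul_apply, smul_eq_mul, abs_mul, abs_neg,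
    abs_of_pos hlam] at hk
  exact (mul_le_iff_le_one_right hlam).1 hk

def signPattern {n : Type*} (v : n → ℝ) : n → ℝ := fun j => if 0 ≤ v j then 1 else -1

theorem signPattern_eq_one_or_neg_one {n : Type*} (v : n → ℝ) (j : n) :
    signPattern v j = 1 ∨ signPattern v j = -1 := by
  unfold signPattern
  split_ifs <;> simp

theorem sign_signPattern {n : Type*} (v : n → ℝ) (j : n) :
    Real.sign (signPattern v j) = signPattern v j := by
  rcases signPattern_eq_one_or_neg_one v j with h | h <;> rw [h] <;> simp [Real.sign_neg]

theorem dotProduct_signPattern {n : Type*} [Fintype n] (v : n → ℝ) :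
    v ⬝ᵥ signPattern v = ∑ j, |v j| := by
  refine Finset.sum_congr rfl fun j _ => ?_
  unfold signPattern
  split_ifs with h
  · simp [abs_of_nonneg h]
  · simp [abs_of_neg (not_le.1 h)]

theorem lasso_incoherence_necessary_general {p : ℕ} (Sig : Matrix (Fin p) (Fin p) ℝ)
    (S : Finset (Fin p)) (hSym : Sig.IsSymm)
    (hInv : IsUnit (Sig.submatrix ((↑) : {x // x ∈ S} → Fin p)
      ((↑) : {x // x ∈ S} → Fin p)))
    (hrec : ∀ (t : ℝ), 0 < t → ∀ βs : Fin p → ℝ,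
      (∀ k ∉ S, βs k = 0) → (∀ j ∈ S, βs j = t ∨ βs j = -t) →
      ∃ lam > (0 : ℝ), ∃ βh : Fin p → ℝ,
        (∀ γ : Fin p → ℝ, lassoObj Sig βs lam βh ≤ lassoObj Sig βs lam γ) ∧
        (∀ k ∉ S, βh k = 0) ∧ (∀ j ∈ S, βh j ≠ 0) ∧
        (∀ j ∈ S, Real.sign (βh j) = Real.sign (βs j))) :
    ∀ k : {x // x ∉ S}, ∑ j : {x // x ∈ S},
      |(Sig.submatrix ((↑) : {x // x ∉ S} → Fin p) ((↑) : {x // x ∈ S} → Fin p) *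
        (Sig.submatrix ((↑) : {x // x ∈ S} → Fin p)
          ((↑) : {x // x ∈ S} → Fin p))⁻¹) k j| ≤ 1 := by
  intro k
  set M := Sig.submatrix ((↑) : {x // x ∉ S} → Fin p) ((↑) : {x // x ∈ S} → Fin p) *
    (Sig.submatrix ((↑) : {x // x ∈ S} → Fin p) ((↑) : {x // x ∈ S} → Fin p))⁻¹
  set ε := signPattern (M k)
  let βs : Fin p → ℝ := fun i => if h : i ∈ S then ε ⟨i, h⟩ else 0
  obtain ⟨lam, hlam, βh, hmin, hoff, hnz, hsign⟩ := hrec 1 one_pos βs (fun i hi => dif_neg hi)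
    fun j hj => by simpa [βs, hj] using signPattern_eq_one_or_neg_one (M k) ⟨j, hj⟩
  have hd : ∀ i ∉ S, (βh - βs) i = 0 := fun i hi => by simp [βs, hi, hoff i hi]
  have hactive : Sig.submatrix (↑) (↑) *ᵥ (fun j : S => (βh - βs) j) = -lam • ε := by
    ext j
    rw [← mulVec_apply_eq_submatrix_mulVec _ _ hd, lasso_grad_eq_of_ne_zero hSym hmin (hnz j j.2),
      hsign j j.2]
    simp [βs, ε, sign_signPattern]
  have hk := abs_lasso_grad_le_of_eq_zero hSym hmin (hoff k k.2)
  rw [mulVec_apply_eq_submatrix_mulVec _ ((↑) : {x // x ∉ S} → Fin p) hd] at hk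
  have := abs_mul_inv_mulVec_le_one hInv _ hlam hactive hk
  rwa [mulVec, dotProduct_signPattern, abs_of_nonneg (Finset.sum_nonneg fun _ _ => abs_nonneg _)]
    at this

/-- Proposition (necessity of Lasso incoherence): if the population Lasso is sign selection
consistent for every sign pattern over `S`, then `‖Σ_{S^c S} Σ_{SS}⁻¹‖_∞ ≤ 1`. -/
theorem lasso_incoherence_necessary {p : ℕ} (Sig : Matrix (Fin p) (Fin p) ℝ)
    (S : Finset (Fin p)) (hSym : Sig.IsSymm) (hPSD : Sig.PosSemidef)
    (hS : S.Nonempty) (hne : S ≠ Finset.univ)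
    (hInv : IsUnit (Sig.submatrix ((↑) : {x // x ∈ S} → Fin p)
      ((↑) : {x // x ∈ S} → Fin p)))
    (hrec : ∀ (t : ℝ), 0 < t → ∀ βs : Fin p → ℝ,
      (∀ k ∉ S, βs k = 0) → (∀ j ∈ S, βs j = t ∨ βs j = -t) →
      ∃ lam > (0 : ℝ), ∃ βh : Fin p → ℝ,
        (∀ γ : Fin p → ℝ, lassoObj Sig βs lam βh ≤ lassoObj Sig βs lam γ) ∧
        (∀ k ∉ S, βh k = 0) ∧ (∀ j ∈ S, βh j ≠ 0) ∧
        (∀ j ∈ S, Real.sign (βh j) = Real.sign (βs j))) :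
    ∀ k : {x // x ∉ S}, ∑ j : {x // x ∈ S},
      |(Sig.submatrix ((↑) : {x // x ∉ S} → Fin p) ((↑) : {x // x ∈ S} → Fin p) *
        (Sig.submatrix ((↑) : {x // x ∈ S} → Fin p)
          ((↑) : {x // x ∈ S} → Fin p))⁻¹) k j| ≤ 1 :=
  lasso_incoherence_necessary_general Sig S hSym hInv hrec
end
end

section
/- Let Σ ∈ ℝ^{p×p} be symmetric positive semidefinite, and let S ⊆ {1,…,p} be nonempty with Σ_{SS} invertible. Suppose ‖Σ_{S^cS}·Σ_{SS}^{-1}‖_∞ ≤ 1 − δ for some δ ∈ (0,1), where ‖·‖_∞ is the ℓ_∞→ℓ_∞ operator norm. Then for every β* ∈ ℝ^p with β*_k = 0 for all k ∉ S and β*_j ≠ 0 for all j ∈ S, there exists λ₀ > 0 such that for every λ ∈ (0, λ₀), the function β ↦ (1/2)·βᵀΣβ − βᵀΣβ* + λ‖β‖₁ has a unique minimizer β̂ over ℝ^p, and this minimizer satisfies β̂_k = 0 for all k ∉ S, β̂_j ≠ 0 for all j ∈ S, and sign(β̂_j) = sign(β*_j) for all j ∈ S. -/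
open Matrix BigOperators

noncomputable section

lemma real_sign_mul_self (r : ℝ) : Real.sign r * r = |r| := by
  rcases lt_trichotomy r 0 with h | h | h
  · rw [Real.sign_of_neg h, abs_of_neg h]; ring
  · simp [h]
  · rw [Real.sign_of_pos h, abs_of_pos h]; ring

lemma real_sign_abs_le (r : ℝ) : |Real.sign r| ≤ 1 := by
  rcases Real.sign_apply_eq r with h | h | h <;> simp [h]

lemma sign_sub_of_abs_lt {a t : ℝ} (h : |t| < |a|) :
    a - t ≠ 0 ∧ Real.sign (a - t) = Real.sign a := by
  rcases lt_trichotomy a 0 with ha | ha | ha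
  · have : a - t < 0 := by rcases abs_lt.mp h with ⟨h2, h3⟩; rw [abs_of_neg ha] at h2; linarith
    exact ⟨ne_of_lt this, by rw [Real.sign_of_neg this, Real.sign_of_neg ha]⟩
  · simp [ha] at h; linarith [abs_nonneg t, h]
  · have : 0 < a - t := by rcases abs_lt.mp h with ⟨h2, h3⟩; rw [abs_of_pos ha] at h3; linarith
    exact ⟨ne_of_gt this, by rw [Real.sign_of_pos this, Real.sign_of_pos ha]⟩

/-- Proposition (sufficiency of Lasso incoherence): if `‖Σ_{S^c S} Σ_{SS}⁻¹‖_∞ ≤ 1 - δ` for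
some `δ ∈ (0,1)`, then for every `β*` supported exactly on `S` and every sufficiently small
`λ > 0`, the population Lasso has a unique minimizer, which is sign selection consistent. -/
theorem lasso_incoherence_sufficient {p : ℕ} (Sig : Matrix (Fin p) (Fin p) ℝ)
    (S : Finset (Fin p)) (hSym : Sig.IsSymm) (hPSD : Sig.PosSemidef) (hS : S.Nonempty)
    (hInv : IsUnit (Sig.submatrix ((↑) : {x // x ∈ S} → Fin p)
      ((↑) : {x // x ∈ S} → Fin p)))
    (δ : ℝ) (hδ0 : 0 < δ) (hδ1 : δ < 1)
    (hinc : ∀ k : {x // x ∉ S}, ∑ j : {x // x ∈ S},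
      |(Sig.submatrix ((↑) : {x // x ∉ S} → Fin p) ((↑) : {x // x ∈ S} → Fin p) *
        (Sig.submatrix ((↑) : {x // x ∈ S} → Fin p)
          ((↑) : {x // x ∈ S} → Fin p))⁻¹) k j| ≤ 1 - δ) :
    ∀ βs : Fin p → ℝ, (∀ k ∉ S, βs k = 0) → (∀ j ∈ S, βs j ≠ 0) →
      ∃ lam₀ > (0 : ℝ), ∀ lam : ℝ, 0 < lam → lam < lam₀ →
        ∃ βh : Fin p → ℝ,
          (∀ γ : Fin p → ℝ, lassoObj Sig βs lam βh ≤ lassoObj Sig βs lam γ) ∧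
          (∀ βh' : Fin p → ℝ,
            (∀ γ : Fin p → ℝ, lassoObj Sig βs lam βh' ≤ lassoObj Sig βs lam γ) → βh' = βh) ∧
          (∀ k ∉ S, βh k = 0) ∧ (∀ j ∈ S, βh j ≠ 0) ∧
          (∀ j ∈ S, Real.sign (βh j) = Real.sign (βs j)) := by
  classical
  intro βs hb0 hbS
  haveI : Nonempty {x // x ∈ S} := ⟨⟨hS.choose, hS.choose_spec⟩⟩
  set A : Matrix {x // x ∈ S} {x // x ∈ S} ℝ :=
    Sig.submatrix ((↑) : {x // x ∈ S} → Fin p) ((↑) : {x // x ∈ S} → Fin p) with hAdef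
  have hdet : IsUnit A.det := (Matrix.isUnit_iff_isUnit_det A).mp hInv
  set z : {x // x ∈ S} → ℝ := fun j => Real.sign (βs j) with hzdef
  set u : {x // x ∈ S} → ℝ := A⁻¹ *ᵥ z with hudef
  have hAu : A *ᵥ u = z := by
    rw [hudef, Matrix.mulVec_mulVec, Matrix.mul_nonsing_inv _ hdet, Matrix.one_mulVec]
  -- bounds
  set c : ℝ := Finset.univ.sup' Finset.univ_nonempty (fun j : {x // x ∈ S} => |u j|) with hcdef
  have hc0 : 0 ≤ c := by
    obtain ⟨j⟩ := (inferInstance : Nonempty {x // x ∈ S})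
    rw [hcdef]
    exact le_trans (abs_nonneg (u j))
      (Finset.le_sup' (fun j : {x // x ∈ S} => |u j|) (Finset.mem_univ j))
  set m : ℝ := Finset.univ.inf' Finset.univ_nonempty (fun j : {x // x ∈ S} => |βs j|) with hmdef
  have hm0 : 0 < m := by
    rw [hmdef, Finset.lt_inf'_iff]
    intro j _
    exact abs_pos.mpr (hbS j j.2)
  refine ⟨m / (c + 1), div_pos hm0 (by linarith), ?_⟩
  intro lam hlam0 hlam1
  have hlamc : ∀ j : {x // x ∈ S}, |lam * u j| < |βs j| := by
    intro j
    have h1 : |u j| ≤ c := by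
      rw [hcdef]
      exact Finset.le_sup' (fun j : {x // x ∈ S} => |u j|) (Finset.mem_univ j)
    have h2 : m ≤ |βs j| := by
      rw [hmdef]
      exact Finset.inf'_le (fun j : {x // x ∈ S} => |βs j.1|) (Finset.mem_univ j)
    have h3 : lam * (c + 1) < m := (lt_div_iff₀ (by linarith)).mp hlam1
    rw [abs_mul, abs_of_pos hlam0]
    nlinarith
  set βh : Fin p → ℝ := fun i => if h : i ∈ S then βs i - lam * u ⟨i, h⟩ else 0 with hβhdef
  have hβh0 : ∀ k ∉ S, βh k = 0 := fun k hk => dif_neg hk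
  have hβhS : ∀ j (hj : j ∈ S), βh j = βs j - lam * u ⟨j, hj⟩ := fun j hj => dif_pos hj
  have hβhne : ∀ j ∈ S, βh j ≠ 0 := by
    intro j hj
    rw [hβhS j hj]
    exact (sign_sub_of_abs_lt (hlamc ⟨j, hj⟩)).1
  have hβhsign : ∀ j ∈ S, Real.sign (βh j) = Real.sign (βs j) := by
    intro j hj
    rw [hβhS j hj]
    exact (sign_sub_of_abs_lt (hlamc ⟨j, hj⟩)).2
  -- the gradient of the smooth part at βh
  set d : Fin p → ℝ := fun i => βh i - βs i with hddef
  have hd : ∀ i, d i = if h : i ∈ S then -(lam * u ⟨i, h⟩) else 0 := by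
    intro i
    by_cases h : i ∈ S
    · simp only [hddef, hβhS i h, dif_pos h]; ring
    · simp only [hddef, hβh0 i h, hb0 i h, dif_neg h, sub_zero]
  set g : Fin p → ℝ := Sig *ᵥ d with hgdef
  have hgval : ∀ i : Fin p, g i = -lam * ∑ j : {x // x ∈ S}, Sig i j * u j := by
    intro i
    have h1 : g i = ∑ j : Fin p, Sig i j * d j := by
      simp [hgdef, Matrix.mulVec, dotProduct]
    rw [h1]
    have h2 : ∑ j : Fin p, Sig i j * d j = ∑ j ∈ S, Sig i j * d j := by
      refine (Finset.sum_subset S.subset_univ ?_).symm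
      intro x _ hx
      rw [hd x, dif_neg hx, mul_zero]
    rw [h2, ← Finset.sum_coe_sort S (fun j => Sig i j * d j)]
    rw [Finset.mul_sum]
    refine Finset.sum_congr rfl ?_
    intro j _
    rw [hd j, dif_pos j.2]
    ring_nf
  have hgS : ∀ j : {x // x ∈ S}, g j.1 = -lam * z j := by
    intro j
    rw [hgval j.1]
    congr 1
    have : (A *ᵥ u) j = z j := by rw [hAu]
    rw [← this]
    simp [Matrix.mulVec, dotProduct, hAdef]
  have hgSc : ∀ k (hk : k ∉ S), |g k| ≤ lam * (1 - δ) := by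
    intro k hk
    set B : Matrix {x // x ∉ S} {x // x ∈ S} ℝ :=
      Sig.submatrix ((↑) : {x // x ∉ S} → Fin p) ((↑) : {x // x ∈ S} → Fin p) with hBdef
    have h1 : g k = -lam * ((B * A⁻¹) *ᵥ z) ⟨k, hk⟩ := by
      rw [hgval k]
      congr 1
      rw [← Matrix.mulVec_mulVec, ← hudef]
      simp [Matrix.mulVec, dotProduct, hBdef]
    rw [h1, abs_mul, abs_neg, abs_of_pos hlam0]
    refine mul_le_mul_of_nonneg_left ?_ hlam0.le
    calc |((B * A⁻¹) *ᵥ z) ⟨k, hk⟩| = |∑ j, (B * A⁻¹) ⟨k, hk⟩ j * z j| := by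
          simp [Matrix.mulVec, dotProduct]
      _ ≤ ∑ j, |(B * A⁻¹) ⟨k, hk⟩ j * z j| := Finset.abs_sum_le_sum_abs _ _
      _ ≤ ∑ j, |(B * A⁻¹) ⟨k, hk⟩ j| := by
          refine Finset.sum_le_sum ?_
          intro j _
          rw [abs_mul]
          calc |(B * A⁻¹) ⟨k, hk⟩ j| * |z j| ≤ |(B * A⁻¹) ⟨k, hk⟩ j| * 1 :=
                mul_le_mul_of_nonneg_left (real_sign_abs_le _) (abs_nonneg _)
            _ = _ := mul_one _
      _ ≤ 1 - δ := hinc ⟨k, hk⟩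
  -- symmetry of the quadratic form
  have hsymm : ∀ x y : Fin p → ℝ, x ⬝ᵥ Sig *ᵥ y = y ⬝ᵥ Sig *ᵥ x := by
    intro x y
    rw [Matrix.dotProduct_mulVec, ← Matrix.mulVec_transpose, hSym.eq, dotProduct_comm]
  -- key decomposition
  set t : (Fin p → ℝ) → Fin p → ℝ :=
    fun γ i => (γ i - βh i) * g i + lam * (|γ i| - |βh i|) with htdef
  have hdecomp : ∀ γ : Fin p → ℝ, lassoObj Sig βs lam γ - lassoObj Sig βs lam βh =
      (1/2) * ((γ - βh) ⬝ᵥ Sig *ᵥ (γ - βh)) + ∑ i, t γ i := by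
    intro γ
    have hsum : ∑ i, t γ i = (γ - βh) ⬝ᵥ g + lam * ((∑ i, |γ i|) - ∑ i, |βh i|) := by
      simp only [htdef, dotProduct, Pi.sub_apply]
      rw [Finset.sum_add_distrib, ← Finset.mul_sum, Finset.sum_sub_distrib]
    rw [hsum, hgdef, hddef]
    have e1 : (γ - βh) ⬝ᵥ Sig *ᵥ (γ - βh)
        = γ ⬝ᵥ Sig *ᵥ γ - γ ⬝ᵥ Sig *ᵥ βh - γ ⬝ᵥ Sig *ᵥ βh + βh ⬝ᵥ Sig *ᵥ βh := by
      rw [Matrix.mulVec_sub, dotProduct_sub, sub_dotProduct,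
        sub_dotProduct, hsymm βh γ]
      ring
    have e2 : (γ - βh) ⬝ᵥ Sig *ᵥ (fun i => βh i - βs i)
        = γ ⬝ᵥ Sig *ᵥ βh - γ ⬝ᵥ Sig *ᵥ βs - βh ⬝ᵥ Sig *ᵥ βh + βh ⬝ᵥ Sig *ᵥ βs := by
      have : (fun i => βh i - βs i) = βh - βs := rfl
      rw [this, Matrix.mulVec_sub, dotProduct_sub, sub_dotProduct,
        sub_dotProduct]
      ring
    rw [e1, e2]
    simp only [lassoObj]
    ring
  -- bounds on t
  have ht_nonneg : ∀ γ : Fin p → ℝ, ∀ i, 0 ≤ t γ i := by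
    intro γ i
    by_cases hi : i ∈ S
    · have hg : g i = -lam * Real.sign (βh i) := by
        rw [hgS ⟨i, hi⟩, hzdef, hβhsign i hi]
      have habs : |βh i| = Real.sign (βh i) * βh i := (real_sign_mul_self _).symm
      have h2 : Real.sign (βh i) * γ i ≤ |γ i| := by
        calc Real.sign (βh i) * γ i ≤ |Real.sign (βh i) * γ i| := le_abs_self _
          _ = |Real.sign (βh i)| * |γ i| := abs_mul _ _
          _ ≤ 1 * |γ i| := mul_le_mul_of_nonneg_right (real_sign_abs_le _) (abs_nonneg _)
          _ = |γ i| := one_mul _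
      have : t γ i = lam * |γ i| - lam * (Real.sign (βh i) * γ i) := by
        simp only [htdef]; rw [hg, habs]; ring
      rw [this]
      have := mul_le_mul_of_nonneg_left h2 hlam0.le
      linarith
    · have hb : βh i = 0 := hβh0 i hi
      have hgk : |g i| ≤ lam * (1 - δ) := hgSc i hi
      have : t γ i = γ i * g i + lam * |γ i| := by
        simp only [htdef]; rw [hb]; simp
      rw [this]
      nlinarith [neg_abs_le (γ i * g i), abs_mul (γ i) (g i), abs_nonneg (γ i),
        mul_le_mul_of_nonneg_left hgk (abs_nonneg (γ i)),
        mul_nonneg (mul_nonneg hlam0.le hδ0.le) (abs_nonneg (γ i))]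
  have ht_Sc : ∀ γ : Fin p → ℝ, ∀ k, k ∉ S → lam * δ * |γ k| ≤ t γ k := by
    intro γ k hk
    have hb : βh k = 0 := hβh0 k hk
    have hgk : |g k| ≤ lam * (1 - δ) := hgSc k hk
    have : t γ k = γ k * g k + lam * |γ k| := by
      simp only [htdef]; rw [hb]; simp
    rw [this]
    nlinarith [neg_abs_le (γ k * g k), abs_mul (γ k) (g k), abs_nonneg (γ k),
      mul_le_mul_of_nonneg_left hgk (abs_nonneg (γ k)),
      mul_nonneg (mul_nonneg hlam0.le hδ0.le) (abs_nonneg (γ k))]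
  have hquad : ∀ x : Fin p → ℝ, 0 ≤ x ⬝ᵥ Sig *ᵥ x := by
    intro x
    have := hPSD.dotProduct_mulVec_nonneg x
    simpa using this
  have hmin : ∀ γ : Fin p → ℝ, lassoObj Sig βs lam βh ≤ lassoObj Sig βs lam γ := by
    intro γ
    have h1 := hdecomp γ
    have h2 : 0 ≤ ∑ i, t γ i := Finset.sum_nonneg (fun i _ => ht_nonneg γ i)
    have h3 := hquad (γ - βh)
    linarith
  refine ⟨βh, hmin, ?_, hβh0, hβhne, hβhsign⟩
  -- uniqueness
  intro βh' hmin'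
  have heq : lassoObj Sig βs lam βh' = lassoObj Sig βs lam βh :=
    le_antisymm (hmin' βh) (hmin βh')
  have h1 := hdecomp βh'
  rw [heq, sub_self] at h1
  have h2 : 0 ≤ ∑ i, t βh' i := Finset.sum_nonneg (fun i _ => ht_nonneg βh' i)
  have h3 := hquad (βh' - βh)
  have hQ0 : (βh' - βh) ⬝ᵥ Sig *ᵥ (βh' - βh) = 0 := by linarith
  have hT0 : ∑ i, t βh' i = 0 := by linarith
  -- off-support coordinates vanish
  have hzero : ∀ k ∉ S, βh' k = 0 := by
    intro k hk
    have hti : t βh' k = 0 := by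
      have := (Finset.sum_eq_zero_iff_of_nonneg
        (fun i _ => ht_nonneg βh' i)).mp hT0 k (Finset.mem_univ k)
      exact this
    have := ht_Sc βh' k hk
    rw [hti] at this
    have h4 : |βh' k| = 0 := by nlinarith [abs_nonneg (βh' k), mul_pos hlam0 hδ0]
    exact abs_eq_zero.mp h4
  -- support coordinates coincide
  have hker : Sig *ᵥ (βh' - βh) = 0 := by
    have := (hPSD.dotProduct_mulVec_zero_iff (βh' - βh))
    rw [star_trivial] at this
    exact this.mp hQ0
  set w : {x // x ∈ S} → ℝ := fun j => βh' j - βh j with hwdef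
  have hAw : A *ᵥ w = 0 := by
    funext j
    have h5 : (Sig *ᵥ (βh' - βh)) j.1 = 0 := by rw [hker]; rfl
    have h6 : (A *ᵥ w) j = (Sig *ᵥ (βh' - βh)) j.1 := by
      simp only [Matrix.mulVec, dotProduct, hAdef, Matrix.submatrix_apply, hwdef,
        Pi.sub_apply]
      rw [show ∑ x : Fin p, Sig j.1 x * (βh' x - βh x)
          = ∑ x ∈ S, Sig j.1 x * (βh' x - βh x) from (Finset.sum_subset S.subset_univ
            (fun x _ hx => by rw [hzero x hx, hβh0 x hx]; ring)).symm]
      rw [← Finset.sum_coe_sort S (fun x => Sig j.1 x * (βh' x - βh x))]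
    rw [h6, h5]
    rfl
  have hw0 : w = 0 := by
    have := congrArg (fun v => A⁻¹ *ᵥ v) hAw
    simpa [Matrix.mulVec_mulVec, Matrix.nonsing_inv_mul _ hdet, Matrix.one_mulVec] using this
  funext i
  by_cases hi : i ∈ S
  · have : w ⟨i, hi⟩ = 0 := by rw [hw0]; rfl
    simpa [hwdef, sub_eq_zero] using this
  · rw [hzero i hi, hβh0 i hi]
end
end

section
/- Let Σ ∈ ℝ^{p×p} be symmetric positive semidefinite with unit diagonal, let S ⊆ {1,…,p}, j ∈ S, k ∉ S, R ∈ [1,∞) and δ' ≥ 0. Write u(λ) := Σ_{Sj} + λ·Σ_{Sk} ∈ ℝ^S (the S-indexed vector with entries Σ_{j'j} + λΣ_{j'k}, j' ∈ S). If for every λ ∈ [−1,1] one has (R/(1+R))·‖u(λ)‖₁ + δ'/(1+R) < ‖u(λ)‖_∞, then for every λ ∈ [−1,1], ‖u(λ)‖_∞ = Σ_{jj} + λ·Σ_{jk}. -/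
open Matrix BigOperators

noncomputable section

lemma abs_entry_le_one' {p : ℕ} (Sig : Matrix (Fin p) (Fin p) ℝ)
    (hSym : Sig.IsSymm) (hPSD : Sig.PosSemidef) (hdiag : ∀ i, Sig i i = 1)
    (a b : Fin p) : |Sig a b| ≤ 1 := by
  rcases eq_or_ne a b with rfl | hab
  · simp [hdiag a]
  · have hsym : Sig b a = Sig a b := by
      have := congrFun (congrFun hSym a) b
      simpa [Matrix.transpose_apply] using this
    set x : Fin p → ℝ := (Pi.single a 1 : Fin p → ℝ) + (-(Sig a b)) • (Pi.single b 1 : Fin p → ℝ) with hx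
    have h0 := hPSD.dotProduct_mulVec_nonneg x
    have e : dotProduct (star x) (Sig *ᵥ x) = 1 - Sig a b * Sig a b := by
      simp [hx, Matrix.mulVec_add, Matrix.mulVec_smul, Matrix.mulVec_single,
        dotProduct_add, add_dotProduct, smul_dotProduct, single_dotProduct,
        dotProduct_single, Matrix.mulVec_neg, Pi.smul_apply, smul_eq_mul, Pi.neg_apply, hdiag, hsym, hab, hab.symm, mul_comm]
      ring
    rw [e] at h0
    exact abs_le.mpr ⟨by nlinarith, by nlinarith⟩

/-- Lemma: if `(R/(1+R))‖u(λ)‖₁ + δ'/(1+R) < ‖u(λ)‖_∞` for all `λ ∈ [-1,1]`, where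
`u(λ) = Σ_{Sj} + λ Σ_{Sk}`, then `‖u(λ)‖_∞ = Σ_{jj} + λ Σ_{jk}` for all `λ ∈ [-1,1]`. -/
theorem sup_eq_diag_entry {p : ℕ} (Sig : Matrix (Fin p) (Fin p) ℝ) (S : Finset (Fin p))
    (hSym : Sig.IsSymm) (hPSD : Sig.PosSemidef) (hdiag : ∀ i, Sig i i = 1)
    (j k : Fin p) (hj : j ∈ S) (hk : k ∉ S) (R δ' : ℝ) (hR : 1 ≤ R) (hδ' : 0 ≤ δ')
    (h : ∀ lam ∈ Set.Icc (-1 : ℝ) 1,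
      (R / (1 + R)) * (∑ j' ∈ S, |Sig j' j + lam * Sig j' k|) + δ' / (1 + R) <
        S.sup' ⟨j, hj⟩ fun j' => |Sig j' j + lam * Sig j' k|) :
    ∀ lam ∈ Set.Icc (-1 : ℝ) 1,
      (S.sup' ⟨j, hj⟩ fun j' => |Sig j' j + lam * Sig j' k|) = Sig j j + lam * Sig j k := by
  have habs : ∀ a b, |Sig a b| ≤ 1 := abs_entry_le_one' Sig hSym hPSD hdiag
  -- nonnegativity of the j-entry
  have hujnn : ∀ lam ∈ Set.Icc (-1:ℝ) 1, 0 ≤ Sig j j + lam * Sig j k := by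
    intro lam hl
    have h1 : |lam * Sig j k| ≤ 1 := by
      rw [abs_mul]
      have := habs j k
      have h2 : |lam| ≤ 1 := abs_le.mpr ⟨hl.1, hl.2⟩
      calc |lam| * |Sig j k| ≤ 1 * 1 :=
        mul_le_mul h2 this (abs_nonneg _) (by linarith [abs_nonneg lam])
      _ = 1 := by ring
    have := abs_le.mp h1
    rw [hdiag j]; linarith [this.1]
  -- strict dominance whenever the sup equals the j-entry
  have dom : ∀ lam ∈ Set.Icc (-1:ℝ) 1,
      (S.sup' ⟨j, hj⟩ fun j' => |Sig j' j + lam * Sig j' k|) = |Sig j j + lam * Sig j k| →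
      ∀ j' ∈ S, j' ≠ j → |Sig j' j + lam * Sig j' k| < |Sig j j + lam * Sig j k| := by
    intro lam hl hF j' hj' hne
    have hh := h lam hl
    rw [hF] at hh
    set T := ∑ i ∈ S, |Sig i j + lam * Sig i k| with hT
    have hTnn : 0 ≤ T := Finset.sum_nonneg fun _ _ => abs_nonneg _
    have hT2 : |Sig j j + lam * Sig j k| + |Sig j' j + lam * Sig j' k| ≤ T := by
      have hsub : ({j, j'} : Finset (Fin p)) ⊆ S := by
        intro x hx
        rcases Finset.mem_insert.mp hx with rfl | hx
        · exact hj
        · rw [Finset.mem_singleton.mp hx]; exact hj'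
      calc |Sig j j + lam * Sig j k| + |Sig j' j + lam * Sig j' k|
          = ∑ i ∈ ({j, j'} : Finset (Fin p)), |Sig i j + lam * Sig i k| :=
            (Finset.sum_pair (f := fun i => |Sig i j + lam * Sig i k|) (Ne.symm hne)).symm
        _ ≤ T := Finset.sum_le_sum_of_subset_of_nonneg hsub fun _ _ _ => abs_nonneg _
    have hRpos : (0:ℝ) < 1 + R := by linarith
    have e1 : (R / (1 + R)) * T + δ' / (1 + R) = (R * T + δ') / (1 + R) := by ring
    rw [e1] at hh
    have h2 : R * T + δ' < |Sig j j + lam * Sig j k| * (1 + R) := (div_lt_iff₀ hRpos).mp hh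
    have h3 : R * (|Sig j j + lam * Sig j k| + |Sig j' j + lam * Sig j' k|) ≤ R * T :=
      mul_le_mul_of_nonneg_left hT2 (by linarith)
    nlinarith [abs_nonneg (Sig j' j + lam * Sig j' k)]
  -- the two open sets
  set D : Set ℝ := ⋂ j' ∈ S.filter (fun x => x ≠ j),
    {lam : ℝ | |Sig j' j + lam * Sig j' k| < |Sig j j + lam * Sig j k|} with hD
  set V : Set ℝ := ⋃ j' ∈ S.filter (fun x => x ≠ j),
    {lam : ℝ | |Sig j j + lam * Sig j k| < |Sig j' j + lam * Sig j' k|} with hV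
  have cont : ∀ a b : Fin p, Continuous fun lam : ℝ => |Sig a b + lam * Sig a k| :=
    fun a b => (continuous_const.add (continuous_id.mul continuous_const)).abs
  have hDopen : IsOpen D :=
    isOpen_biInter_finset fun i _ => isOpen_lt (cont i j) (cont j j)
  have hVopen : IsOpen V :=
    isOpen_biUnion fun i _ => isOpen_lt (cont j j) (cont i j)
  have hmemD : ∀ lam : ℝ, lam ∈ D ↔
      ∀ j' ∈ S, j' ≠ j → |Sig j' j + lam * Sig j' k| < |Sig j j + lam * Sig j k| := by
    intro lam
    constructor
    · intro hd j' hj' hne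
      have := Set.mem_iInter₂.mp hd j' (Finset.mem_filter.mpr ⟨hj', hne⟩)
      exact this
    · intro hd
      refine Set.mem_iInter₂.mpr fun i hi => ?_
      obtain ⟨hi1, hi2⟩ := Finset.mem_filter.mp hi
      exact hd i hi1 hi2
  -- D implies sup equals j-entry
  have hDsup : ∀ lam : ℝ, lam ∈ D →
      (S.sup' ⟨j, hj⟩ fun j' => |Sig j' j + lam * Sig j' k|) = |Sig j j + lam * Sig j k| := by
    intro lam hd
    refine le_antisymm (Finset.sup'_le _ _ fun i hi => ?_)
      (Finset.le_sup' (fun j' => |Sig j' j + lam * Sig j' k|) hj)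
    rcases eq_or_ne i j with rfl | hne
    · exact le_refl _
    · exact le_of_lt ((hmemD lam).mp hd i hi hne)
  -- covering
  have cover : Set.Icc (-1:ℝ) 1 ⊆ D ∪ V := by
    intro lam hl
    obtain ⟨j₀, hj₀, hsup⟩ := S.exists_mem_eq_sup' ⟨j, hj⟩
      (fun j' => |Sig j' j + lam * Sig j' k|)
    rcases le_or_gt (|Sig j₀ j + lam * Sig j₀ k|) (|Sig j j + lam * Sig j k|) with hle | hlt
    · left
      have hF : (S.sup' ⟨j, hj⟩ fun j' => |Sig j' j + lam * Sig j' k|)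
          = |Sig j j + lam * Sig j k| := by
        refine le_antisymm ?_ (Finset.le_sup' (fun j' => |Sig j' j + lam * Sig j' k|) hj)
        rw [hsup]; exact hle
      exact (hmemD lam).mpr (dom lam hl hF)
    · right
      have hne : j₀ ≠ j := by rintro rfl; exact lt_irrefl _ hlt
      exact Set.mem_biUnion (Finset.mem_filter.mpr ⟨hj₀, hne⟩) hlt
  -- disjointness
  have disj : ∀ lam : ℝ, lam ∈ D → lam ∈ V → False := by
    intro lam hd hv
    obtain ⟨i, hi, hlt⟩ := Set.mem_iUnion₂.mp hv
    obtain ⟨hi1, hi2⟩ := Finset.mem_filter.mp hi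
    exact absurd ((hmemD lam).mp hd i hi1 hi2) (not_lt.mpr (le_of_lt hlt))
  -- 0 is in D
  have h0D : (0:ℝ) ∈ D := by
    have h0I : (0:ℝ) ∈ Set.Icc (-1:ℝ) 1 := ⟨by norm_num, by norm_num⟩
    have hF : (S.sup' ⟨j, hj⟩ fun j' => |Sig j' j + (0:ℝ) * Sig j' k|)
        = |Sig j j + (0:ℝ) * Sig j k| := by
      refine le_antisymm (Finset.sup'_le _ _ fun i hi => ?_)
        (Finset.le_sup' (fun j' => |Sig j' j + (0:ℝ) * Sig j' k|) hj)
      simp only [zero_mul, add_zero]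
      rw [hdiag j, abs_one]
      exact habs i j
    exact (hmemD 0).mpr (dom 0 h0I hF)
  -- connectedness: V misses the interval
  have hVempty : Set.Icc (-1:ℝ) 1 ∩ V = ∅ := by
    by_contra hne
    obtain ⟨x, hx⟩ := Set.nonempty_iff_ne_empty.mpr hne
    obtain ⟨y, _, hyD, hyV⟩ := (isPreconnected_Icc (a := (-1:ℝ)) (b := 1)) D V hDopen hVopen
      cover ⟨0, ⟨by norm_num, by norm_num⟩, h0D⟩ ⟨x, hx⟩
    exact disj y hyD hyV
  -- conclude
  intro lam hl
  have hlD : lam ∈ D := by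
    rcases cover hl with hd | hv
    · exact hd
    · exact absurd (Set.mem_inter hl hv) (by rw [hVempty]; exact Set.notMem_empty lam)
  rw [hDsup lam hlD]
  exact abs_of_nonneg (hujnn lam hl)
end
end
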